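/- arXiv:math/0410365 — 3 statements merged into one kernel-verified Lean document; each statement's English description precedes it below -/
import Mathlib

section
/- For every Lyndon word α and every r ≥ 1: if r divides g(α), then V_r(P_α) = r · P_{r⁻¹α} (and r⁻¹α is again a Lyndon word); if r does not divide g(α), then V_r(P_α) = 0. -/
open scoped TensorProduct

noncomputable section

/-- `NSymm`, the free ring on `Z₁, Z₂, …`; generator `i : ℕ` represents `Z_{i+1}`. -/
abbrev NSymm : Type := MonoidAlgebra ℤ (FreeMonoid ℕ)

def Zgen : ℕ → NSymm
  | 0 => 1
  | n + 1 => MonoidAlgebra.of ℤ (FreeMonoid ℕ) (FreeMonoid.of n)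

def Zword (l : List ℕ) : NSymm := (l.map Zgen).prod

def Delta : NSymm →ₐ[ℤ] NSymm ⊗[ℤ] NSymm :=
  MonoidAlgebra.lift ℤ (NSymm ⊗[ℤ] NSymm) (FreeMonoid ℕ)
    (FreeMonoid.lift fun i =>
      ∑ a ∈ Finset.range (i + 2), Zgen a ⊗ₜ[ℤ] Zgen (i + 1 - a))

def IsPrimitive (P : NSymm) : Prop :=
  Delta P = 1 ⊗ₜ[ℤ] P + P ⊗ₜ[ℤ] 1

def Ver (r : ℕ) : NSymm →ₐ[ℤ] NSymm :=
  MonoidAlgebra.lift ℤ NSymm (FreeMonoid ℕ)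
    (FreeMonoid.lift fun i => if r ∣ (i + 1) then Zgen ((i + 1) / r) else 0)

def NewtonP (n : ℕ) : NSymm :=
  ∑ c : Composition n,
    ((-1 : ℤ) ^ (c.length + 1) * (c.blocks.getLastD 0 : ℤ)) • Zword c.blocks

def IsComposition (l : List ℕ) : Prop := l ≠ [] ∧ ∀ a ∈ l, 0 < a

def lexLt (l l' : List ℕ) : Prop := List.Lex (· < ·) l l'

def IsLyndon (l : List ℕ) : Prop :=
  IsComposition l ∧ ∀ i, 0 < i → i < l.length → lexLt l (l.drop i)

def gcdL (l : List ℕ) : ℕ := l.foldr Nat.gcd 0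

def wtC (l : List ℕ) : ℕ := l.sum

def wllLt (l l' : List ℕ) : Prop :=
  wtC l < wtC l' ∨ (wtC l = wtC l' ∧
    (l.length < l'.length ∨ (l.length = l'.length ∧ lexLt l l')))

def coeffw (P : NSymm) (w : FreeMonoid ℕ) : ℤ := P.coeff w

def coeffC (P : NSymm) (l : List ℕ) : ℤ := coeffw P (FreeMonoid.ofList (l.map (· - 1)))

def wtWord (w : FreeMonoid ℕ) : ℕ := (FreeMonoid.toList w).sum + (FreeMonoid.toList w).length

def IsHomog (P : NSymm) (n : ℕ) : Prop := ∀ w, coeffw P w ≠ 0 → wtWord w = n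

abbrev TwoNSymm : Type := MonoidAlgebra ℤ (FreeMonoid (ℕ ⊕ ℕ))

def Xgen : ℕ → TwoNSymm
  | 0 => 1
  | n + 1 => MonoidAlgebra.of ℤ (FreeMonoid (ℕ ⊕ ℕ)) (FreeMonoid.of (Sum.inl n))

def Ygen : ℕ → TwoNSymm
  | 0 => 1
  | n + 1 => MonoidAlgebra.of ℤ (FreeMonoid (ℕ ⊕ ℕ)) (FreeMonoid.of (Sum.inr n))

def Delta2 : TwoNSymm →ₐ[ℤ] TwoNSymm ⊗[ℤ] TwoNSymm :=
  MonoidAlgebra.lift ℤ (TwoNSymm ⊗[ℤ] TwoNSymm) (FreeMonoid (ℕ ⊕ ℕ))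
    (FreeMonoid.lift fun s =>
      Sum.elim
        (fun i => ∑ a ∈ Finset.range (i + 2), Xgen a ⊗ₜ[ℤ] Xgen (i + 1 - a))
        (fun i => ∑ a ∈ Finset.range (i + 2), Ygen a ⊗ₜ[ℤ] Ygen (i + 1 - a)) s)

def Ver2 (r : ℕ) : TwoNSymm →ₐ[ℤ] TwoNSymm :=
  MonoidAlgebra.lift ℤ TwoNSymm (FreeMonoid (ℕ ⊕ ℕ))
    (FreeMonoid.lift fun s =>
      Sum.elim
        (fun i => if r ∣ (i + 1) then Xgen ((i + 1) / r) else 0)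
        (fun i => if r ∣ (i + 1) then Ygen ((i + 1) / r) else 0) s)

def coeffw2 (P : TwoNSymm) (w : FreeMonoid (ℕ ⊕ ℕ)) : ℤ := P.coeff w

def xwt (w : FreeMonoid (ℕ ⊕ ℕ)) : ℕ :=
  ((FreeMonoid.toList w).map (Sum.elim (· + 1) (fun _ => 0))).sum

def ywt (w : FreeMonoid (ℕ ⊕ ℕ)) : ℕ :=
  ((FreeMonoid.toList w).map (Sum.elim (fun _ => 0) (· + 1))).sum

def wlLt (p q : ℕ × ℕ) : Prop :=
  p.1 + p.2 < q.1 + q.2 ∨ (p.1 + p.2 = q.1 + q.2 ∧ p.1 < q.1)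

def reduceP (p : ℕ × ℕ) : ℕ × ℕ := (p.1 / Nat.gcd p.1 p.2, p.2 / Nat.gcd p.1 p.2)

def LIdentity (L : ℕ → ℕ → TwoNSymm) : Prop :=
  ∀ u v : ℕ, 1 ≤ u → 1 ≤ v →
    Xgen u * Ygen v - Ygen v * Xgen u =
      ∑ᶠ p ∈ {p : (ℕ × ℕ) × List (ℕ × ℕ) |
          p.2 ≠ [] ∧ (∀ q ∈ p.2, 0 < q.1 ∧ 0 < q.2) ∧
          p.1.1 + (p.2.map Prod.fst).sum = u ∧
          p.1.2 + (p.2.map Prod.snd).sum = v ∧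
          (p.2.map reduceP).Pairwise wlLt},
        Ygen p.1.2 * Xgen p.1.1 * (p.2.map fun q => L q.1 q.2).prod

def NIdentity (N : ℕ → ℕ → NSymm) : Prop :=
  ∀ u v : ℕ, 1 ≤ u → 1 ≤ v →
    (((u + v).choose u : ℤ)) • Zgen (u + v) =
      ∑ᶠ p ∈ {p : (ℕ × ℕ) × List (ℕ × ℕ) |
          (∀ q ∈ p.2, 0 < q.1 ∧ 0 < q.2) ∧
          p.1.1 + (p.2.map Prod.fst).sum = u ∧
          p.1.2 + (p.2.map Prod.snd).sum = v ∧
          (p.2.map reduceP).Pairwise wlLt},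
        Zgen p.1.1 * Zgen p.1.2 * (p.2.map fun q => N q.1 q.2).prod

def substXY (d1 d2 : ℕ → NSymm) : TwoNSymm →ₐ[ℤ] NSymm :=
  MonoidAlgebra.lift ℤ NSymm (FreeMonoid (ℕ ⊕ ℕ))
    (FreeMonoid.lift fun s => Sum.elim (fun i => d1 (i + 1)) (fun i => d2 (i + 1)) s)

def substZ (e : ℕ → NSymm) : NSymm →ₐ[ℤ] NSymm :=
  MonoidAlgebra.lift ℤ NSymm (FreeMonoid ℕ) (FreeMonoid.lift fun i => e (i + 1))

def dSpec (L : ℕ → ℕ → TwoNSymm) (d : List ℕ → ℕ → NSymm) : Prop :=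
  (∀ l, IsLyndon l → d l 0 = 1) ∧
  (∀ n, 0 < n → ∀ i, d [n] i = Zgen i) ∧
  (∀ l, IsLyndon l → 1 < l.length →
    ∀ i₀, 0 < i₀ → i₀ < l.length →
      (∀ j, 0 < j → j < l.length → ¬ lexLt (l.drop j) (l.drop i₀)) →
      ∀ i, d l i =
        substXY (d (l.take i₀)) (d (l.drop i₀))
          (L (i * gcdL (l.take i₀) / gcdL l) (i * gcdL (l.drop i₀) / gcdL l)))

def Pof (d : List ℕ → ℕ → NSymm) (l : List ℕ) : NSymm := substZ (d l) (NewtonP (gcdL l))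

def IsCurveN (c : ℕ → NSymm) : Prop :=
  c 0 = 1 ∧ ∀ n, Delta (c n) = ∑ i ∈ Finset.range (n + 1), c i ⊗ₜ[ℤ] c (n - i)

def IsCurve2 (c : ℕ → TwoNSymm) : Prop :=
  c 0 = 1 ∧ ∀ n, Delta2 (c n) = ∑ i ∈ Finset.range (n + 1), c i ⊗ₜ[ℤ] c (n - i)

def IsVCurveN (c : ℕ → NSymm) : Prop :=
  IsCurveN c ∧ ∀ r n, 1 ≤ r → 1 ≤ n → Ver r (c n) = if r ∣ n then c (n / r) else 0

def IsCurveB (R : Type) [CommRing R] {H : Type} [Ring H] [Bialgebra R H] (c : ℕ → H) : Prop :=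
  c 0 = 1 ∧ ∀ n, Coalgebra.comul (R := R) (c n) = ∑ i ∈ Finset.range (n + 1), c i ⊗ₜ[R] c (n - i)

def Is2CurveB (R : Type) [CommRing R] {H : Type} [Ring H] [Bialgebra R H]
    (c : ℕ → ℕ → H) : Prop :=
  c 0 0 = 1 ∧ ∀ n m, Coalgebra.comul (R := R) (c n m) =
    ∑ i ∈ Finset.range (n + 1), ∑ j ∈ Finset.range (m + 1),
      c i j ⊗ₜ[R] c (n - i) (m - j)

def Mq (α : List ℕ) : MvPowerSeries ℕ ℤ :=
  fun m => if (m.support.sort (· ≤ ·)).map m = α then 1 else 0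

def degm (m : ℕ →₀ ℕ) : ℕ := m.sum fun _ e => e

def QSymmMod : Submodule ℤ (MvPowerSeries ℕ ℤ) :=
  Submodule.span ℤ (insert 1 {f | ∃ α : List ℕ, IsComposition α ∧ f = Mq α})

abbrev NSymmQ : Type := MonoidAlgebra ℚ (FreeMonoid ℕ)

def ZgenQ : ℕ → NSymmQ
  | 0 => 1
  | n + 1 => MonoidAlgebra.of ℚ (FreeMonoid ℕ) (FreeMonoid.of n)

def DeltaQ : NSymmQ →ₐ[ℚ] NSymmQ ⊗[ℚ] NSymmQ :=
  MonoidAlgebra.lift ℚ (NSymmQ ⊗[ℚ] NSymmQ) (FreeMonoid ℕ)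
    (FreeMonoid.lift fun i =>
      ∑ a ∈ Finset.range (i + 2), ZgenQ a ⊗ₜ[ℚ] ZgenQ (i + 1 - a))

def IsPrimitiveQ (P : NSymmQ) : Prop :=
  DeltaQ P = 1 ⊗ₜ[ℚ] P + P ⊗ₜ[ℚ] 1

def toQ : NSymm →ₐ[ℤ] NSymmQ :=
  MonoidAlgebra.lift ℤ NSymmQ (FreeMonoid ℕ) (MonoidAlgebra.of ℚ (FreeMonoid ℕ))

/-!
If a family `c` with `c 0 = 1` satisfies `V_r (c n) = c (n / r)` for `r ∣ n` and `V_r (c n) = 0`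
otherwise, then `V_r` commutes with the substitution of `c` for the generators. The theorem thus
splits into three facts.
* In 2NSymm, `V_r (L_{u,v})` is `L_{u/r,v/r}` if `r` divides `u` and `v`, and `0` otherwise: apply
  `V_r` to the identity defining `L_{u,v}` and argue by induction on `u + v`; scaling all indices
  by `r` matches the surviving terms with those of the identity for `L_{u/r,v/r}`.
* Hence every `d_α` has the property above, by induction along the standard factorisation: as
  `g(α′)/g(α)` and `g(αʺ)/g(α)` are coprime, `r` divides both indices of `L` exactly when `r ∣ i`.
* `V_r (P_n) = r P_{n/r}` (or `0` if `r ∤ n`), by scaling compositions of `n / r`; and `d` is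
  unchanged when a Lyndon word is multiplied by `r`, as are its standard factorisation and the
  index ratios.
-/

theorem MonoidAlgebra.algHom_ext_freeMonoid {α B : Type*} [Ring B] [Algebra ℤ B]
    {φ ψ : MonoidAlgebra ℤ (FreeMonoid α) →ₐ[ℤ] B}
    (h : ∀ a, φ (MonoidAlgebra.of ℤ _ (FreeMonoid.of a)) =
      ψ (MonoidAlgebra.of ℤ _ (FreeMonoid.of a))) :
    φ = ψ :=
  (MonoidAlgebra.lift ℤ B _).symm.injective (FreeMonoid.hom_eq h)

theorem Ver_Zgen (r n : ℕ) : Ver r (Zgen n) = if r ∣ n then Zgen (n / r) else 0 := by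
  cases n with
  | zero => simp [Zgen]
  | succ n => simp [Ver, Zgen]

theorem Ver2_Xgen (r n : ℕ) : Ver2 r (Xgen n) = if r ∣ n then Xgen (n / r) else 0 := by
  cases n with
  | zero => simp [Xgen]
  | succ n => simp [Ver2, Xgen]

theorem Ver2_Ygen (r n : ℕ) : Ver2 r (Ygen n) = if r ∣ n then Ygen (n / r) else 0 := by
  cases n with
  | zero => simp [Ygen]
  | succ n => simp [Ver2, Ygen]

theorem substZ_Zgen {c : ℕ → NSymm} (hc : c 0 = 1) (n : ℕ) : substZ c (Zgen n) = c n := by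
  cases n with
  | zero => simp [Zgen, hc]
  | succ n => simp [substZ, Zgen]

theorem substXY_Xgen {c e : ℕ → NSymm} (hc : c 0 = 1) (n : ℕ) : substXY c e (Xgen n) = c n := by
  cases n with
  | zero => simp [Xgen, hc]
  | succ n => simp [substXY, Xgen]

theorem substXY_Ygen {c e : ℕ → NSymm} (he : e 0 = 1) (n : ℕ) : substXY c e (Ygen n) = e n := by
  cases n with
  | zero => simp [Ygen, he]
  | succ n => simp [substXY, Ygen]

def IsVerCompatible (r : ℕ) (c : ℕ → NSymm) : Prop :=
  c 0 = 1 ∧ ∀ n, Ver r (c n) = if r ∣ n then c (n / r) else 0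

theorem Ver_comp_substZ {r : ℕ} {c : ℕ → NSymm} (hc : IsVerCompatible r c) :
    (Ver r).comp (substZ c) = (substZ c).comp (Ver r) := by
  refine MonoidAlgebra.algHom_ext_freeMonoid fun i => ?_
  change Ver r (substZ c (Zgen (i + 1))) = substZ c (Ver r (Zgen (i + 1)))
  rw [substZ_Zgen hc.1, Ver_Zgen, hc.2, apply_ite (substZ c), substZ_Zgen hc.1, map_zero]

theorem Ver_comp_substXY {r : ℕ} {c e : ℕ → NSymm} (hc : IsVerCompatible r c)
    (he : IsVerCompatible r e) :
    (Ver r).comp (substXY c e) = (substXY c e).comp (Ver2 r) := by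
  refine MonoidAlgebra.algHom_ext_freeMonoid fun i => ?_
  rcases i with i | i
  · change Ver r (substXY c e (Xgen (i + 1))) = substXY c e (Ver2 r (Xgen (i + 1)))
    rw [substXY_Xgen hc.1, Ver2_Xgen, hc.2, apply_ite (substXY c e), substXY_Xgen hc.1, map_zero]
  · change Ver r (substXY c e (Ygen (i + 1))) = substXY c e (Ver2 r (Ygen (i + 1)))
    rw [substXY_Ygen he.1, Ver2_Ygen, he.2, apply_ite (substXY c e), substXY_Ygen he.1, map_zero]

theorem Ver_Zword_map_mul {r : ℕ} (hr : 0 < r) (l : List ℕ) :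
    Ver r (Zword (l.map (r * ·))) = Zword l := by
  simp [Zword, map_list_prod, Function.comp_def, Ver_Zgen, hr]

theorem Ver_Zword_eq_zero {r : ℕ} {l : List ℕ} (h : ∃ a ∈ l, ¬ r ∣ a) : Ver r (Zword l) = 0 := by
  obtain ⟨a, ha, hra⟩ := h
  rw [Zword, map_list_prod, List.map_map]
  exact List.prod_eq_zero (List.mem_map.2 ⟨a, ha, by simp [Ver_Zgen, hra]⟩)

theorem List.map_mul_map_div {r : ℕ} {l : List ℕ} (h : ∀ a ∈ l, r ∣ a) :
    (l.map (· / r)).map (r * ·) = l := by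
  rw [List.map_map]
  exact (List.map_congr_left fun a ha => Nat.mul_div_cancel' (h a ha)).trans (List.map_id _)

namespace Composition

variable {r n : ℕ}

def scale (hr : 0 < r) (c : Composition n) : Composition (r * n) where
  blocks := c.blocks.map (r * ·)
  blocks_pos := by
    simp only [List.mem_map, forall_exists_index, and_imp, forall_apply_eq_imp_iff₂]
    exact fun a ha => Nat.mul_pos hr (c.blocks_pos ha)
  blocks_sum := by rw [List.sum_map_mul_left, List.map_id', c.blocks_sum]

theorem scale_injective (hr : 0 < r) : Function.Injective (scale (n := n) hr) := fun _ _ h =>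
  Composition.ext <| List.map_injective_iff.2 (mul_right_injective₀ hr.ne') (congrArg blocks h)

theorem exists_scale_of_dvd (hr : 0 < r) (c : Composition (r * n)) (h : ∀ a ∈ c.blocks, r ∣ a) :
    ∃ c₀ : Composition n, c₀.scale hr = c := by
  have hmap := List.map_mul_map_div h
  refine ⟨⟨c.blocks.map (· / r), fun {a} ha => ?_, ?_⟩, Composition.ext hmap⟩
  · exact Nat.pos_of_mul_pos_left (c.blocks_pos (hmap ▸ List.mem_map_of_mem ha))
  · have := c.blocks_sum
    rw [← hmap, List.sum_map_mul_left, List.map_id'] at this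
    exact Nat.eq_of_mul_eq_mul_left hr this

end Composition

theorem Ver_NewtonP_mul {r : ℕ} (hr : 0 < r) (n : ℕ) :
    Ver r (NewtonP (r * n)) = (r : ℤ) • NewtonP n := by
  rw [NewtonP, NewtonP, map_sum, Finset.smul_sum]
  symm
  refine Finset.sum_of_injOn (Composition.scale hr) (Composition.scale_injective hr).injOn
    (by simp) (fun c _ hc => ?_) (fun c _ => ?_)
  · rw [map_zsmul, Ver_Zword_eq_zero, smul_zero]
    by_contra! h
    obtain ⟨c₀, rfl⟩ := Composition.exists_scale_of_dvd hr c h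
    exact hc ⟨c₀, by simp, rfl⟩
  · have hlast : (c.blocks.map (r * ·)).getLastD 0 = r * c.blocks.getLastD 0 := by
      simpa using List.getLastD_map (f := (r * ·)) (l := c.blocks) (a := 0)
    simp only [map_zsmul, Composition.scale, Composition.length, List.length_map, hlast,
      Ver_Zword_map_mul hr, smul_smul]
    congr 1
    push_cast
    ring

theorem Ver_NewtonP_of_not_dvd {r n : ℕ} (h : ¬ r ∣ n) : Ver r (NewtonP n) = 0 := by
  rw [NewtonP, map_sum]
  refine Finset.sum_eq_zero fun c _ => ?_
  rw [map_zsmul, Ver_Zword_eq_zero, smul_zero]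
  by_contra! hc
  exact h (c.blocks_sum ▸ List.dvd_sum hc)

theorem gcdL_eq_gcd (l : List ℕ) : gcdL l = (l : Multiset ℕ).gcd := rfl

theorem gcdL_append (a b : List ℕ) : gcdL (a ++ b) = Nat.gcd (gcdL a) (gcdL b) :=
  Multiset.gcd_add (a : Multiset ℕ) b

theorem gcdL_map_mul (r : ℕ) (l : List ℕ) : gcdL (l.map (r * ·)) = r * gcdL l := by
  rw [gcdL_eq_gcd, gcdL_eq_gcd, ← Multiset.map_coe, Multiset.gcd_map_mul, normalize_eq]

theorem dvd_gcdL_iff {r : ℕ} {l : List ℕ} : r ∣ gcdL l ↔ ∀ a ∈ l, r ∣ a := by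
  rw [gcdL_eq_gcd, Multiset.dvd_gcd]
  simp

theorem gcdL_pos {l : List ℕ} (hl : IsComposition l) : 0 < gcdL l := by
  obtain ⟨a, ha⟩ := List.exists_mem_of_ne_nil _ hl.1
  exact Nat.pos_of_ne_zero fun h =>
    (hl.2 a ha).ne' ((Multiset.gcd_eq_zero_iff (l : Multiset ℕ)).1 h a ha)

theorem List.strictMono_map {α β : Type*} [LinearOrder α] [LinearOrder β] {f : α → β}
    (hf : StrictMono f) : StrictMono (List.map f) :=
  fun _ _ h => List.map_lt (fun _ _ => (hf ·)) h

theorem List.lt_of_append_lt_append_left {α : Type*} [LinearOrder α] {s a b : List α}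
    (h : s ++ a < s ++ b) : a < b := by
  rcases lt_trichotomy a b with hab | rfl | hba
  · exact hab
  · exact absurd h (lt_irrefl _)
  · exact absurd h (lt_asymm (List.append_left_lt hba))

theorem List.append_lt_append_of_lt_of_not_isPrefix {α : Type*} [LT α] {s u : List α}
    (h : s < u) (hs : ¬ s <+: u) (x y : List α) : s ++ x < u ++ y := by
  induction h with
  | nil => exact absurd List.nil_prefix hs
  | cons h ih => exact List.Lex.cons (ih fun hp => hs (List.prefix_cons_inj _ |>.2 hp))
  | rel h => exact List.Lex.rel h

def IsSmallestProperTail (l : List ℕ) (i : ℕ) : Prop :=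
  0 < i ∧ i < l.length ∧ ∀ j, 0 < j → j < l.length → ¬ lexLt (l.drop j) (l.drop i)

theorem exists_isSmallestProperTail {l : List ℕ} (hl : 1 < l.length) :
    ∃ i, IsSmallestProperTail l i := by
  obtain ⟨i, hi, hmin⟩ := Finset.exists_min_image (Finset.Ioo 0 l.length) l.drop
    ⟨1, Finset.mem_Ioo.2 ⟨one_pos, hl⟩⟩
  rw [Finset.mem_Ioo] at hi
  exact ⟨i, hi.1, hi.2, fun j hj hjl => not_lt.2 (hmin j (Finset.mem_Ioo.2 ⟨hj, hjl⟩))⟩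

namespace IsLyndon

variable {l : List ℕ} {i : ℕ}

theorem drop (hl : IsLyndon l) (hi : IsSmallestProperTail l i) : IsLyndon (l.drop i) := by
  obtain ⟨hi0, hil, hmin⟩ := hi
  refine ⟨⟨?_, fun a ha => hl.1.2 a (List.mem_of_mem_drop ha)⟩, fun k hk hkl => ?_⟩
  · simp [List.drop_eq_nil_iff]; omega
  rw [List.length_drop] at hkl
  rw [List.drop_drop]
  rcases lt_trichotomy (l.drop i) (l.drop (i + k)) with h | h | h
  · exact h
  · exact absurd (congrArg List.length h) (by simp; omega)
  · exact absurd h (hmin (i + k) (by omega) (by omega))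

theorem take (hl : IsLyndon l) (hi : IsSmallestProperTail l i) : IsLyndon (l.take i) := by
  obtain ⟨hi0, hil, hmin⟩ := hi
  have hlen : (l.take i).length = i := by simp; omega
  refine ⟨⟨?_, fun a ha => hl.1.2 a (List.mem_of_mem_take ha)⟩, fun j hj hji => ?_⟩
  · exact List.ne_nil_of_length_pos (by rw [hlen]; exact hi0)
  rw [hlen] at hji
  set u := l.take i
  set w := l.drop i
  set s := u.drop j
  have hl_eq : u ++ w = l := List.take_append_drop i l
  have hsw : s ++ w = l.drop j := by
    rw [← hl_eq, List.drop_append_of_le_length (by omega)]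
  have hlt : u ++ w < s ++ w := by
    rw [hl_eq, hsw]
    exact hl.2 j hj (by omega)
  rcases lt_trichotomy u s with h | h | h
  · exact h
  · exact absurd (congrArg List.length h) (by simp [s, hlen]; omega)
  by_cases hpre : s <+: u
  · -- `u = s ++ t` makes `t ++ w` a proper tail of `l` smaller than `w`
    obtain ⟨t, hst⟩ := hpre
    have htw : t ++ w < w := List.lt_of_append_lt_append_left (s := s) (by
      rwa [← List.append_assoc, hst])
    have hdrop : l.drop s.length = t ++ w := by
      rw [← hl_eq, ← hst, List.append_assoc, List.drop_left]
    have hslen : s.length = i - j := by simp [s]; omega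
    exact absurd (hdrop ▸ htw) (hmin s.length (by omega) (by omega))
  · exact absurd (List.append_lt_append_of_lt_of_not_isPrefix h hpre w w) (lt_asymm hlt)

theorem induction_on {motive : List ℕ → Prop} (single : ∀ n, 0 < n → motive [n])
    (split : ∀ l i, IsLyndon l → 1 < l.length → IsSmallestProperTail l i →
      motive (l.take i) → motive (l.drop i) → motive l) :
    ∀ l, IsLyndon l → motive l := by
  intro l
  induction hN : l.length using Nat.strong_induction_on generalizing l with
  | _ N ih =>
  intro hl
  rcases l with _ | ⟨a, _ | ⟨b, t⟩⟩
  · exact absurd rfl hl.1.1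
  · exact single a (hl.1.2 a (by simp))
  · obtain ⟨i, hi⟩ := exists_isSmallestProperTail (l := a :: b :: t) (by simp)
    have hi0 := hi.1
    have hil := hi.2.1
    simp only [List.length_cons] at hil
    subst hN
    exact split _ i hl (by simp) hi (ih _ (by simp; omega) _ rfl (hl.take hi))
      (ih _ (by simp; omega) _ rfl (hl.drop hi))

end IsLyndon

section MapMul

variable {r i : ℕ} {l : List ℕ}

theorem lexLt_map_mul_iff (hr : 0 < r) {a b : List ℕ} :
    lexLt (a.map (r * ·)) (b.map (r * ·)) ↔ lexLt a b :=
  (List.strictMono_map (strictMono_mul_left_of_pos hr)).lt_iff_lt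

theorem isLyndon_map_mul_iff (hr : 0 < r) : IsLyndon (l.map (r * ·)) ↔ IsLyndon l := by
  simp only [IsLyndon, IsComposition, ne_eq, List.map_eq_nil_iff, List.forall_mem_map,
    mul_pos_iff_of_pos_left hr, List.length_map, ← List.map_drop, lexLt_map_mul_iff hr]

theorem isSmallestProperTail_map_mul_iff (hr : 0 < r) :
    IsSmallestProperTail (l.map (r * ·)) i ↔ IsSmallestProperTail l i := by
  simp only [IsSmallestProperTail, List.length_map, ← List.map_drop, lexLt_map_mul_iff hr]

end MapMul

theorem List.finite_length_le_of_forall_mem {α : Type*} {s : Set α} (hs : s.Finite) (n : ℕ) :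
    {l : List α | l.length ≤ n ∧ ∀ x ∈ l, x ∈ s}.Finite := by
  have : Finite s := hs
  refine ((List.finite_length_le s n).image (List.map Subtype.val)).subset ?_
  rintro l ⟨hlen, hmem⟩
  lift l to List s using hmem
  exact ⟨l, by simpa using hlen, rfl⟩

/-- The index set of the sum in `LIdentity`; `((0, 0), [(u, v)])` indexes `L u v` itself. -/
def LIndex (u v : ℕ) : Set ((ℕ × ℕ) × List (ℕ × ℕ)) :=
  {p | p.2 ≠ [] ∧ (∀ q ∈ p.2, 0 < q.1 ∧ 0 < q.2) ∧
    p.1.1 + (p.2.map Prod.fst).sum = u ∧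
    p.1.2 + (p.2.map Prod.snd).sum = v ∧
    (p.2.map reduceP).Pairwise wlLt}

def LTerm (L : ℕ → ℕ → TwoNSymm) (p : (ℕ × ℕ) × List (ℕ × ℕ)) : TwoNSymm :=
  Ygen p.1.2 * Xgen p.1.1 * (p.2.map fun q => L q.1 q.2).prod

def scaleIndex (r : ℕ) (p : (ℕ × ℕ) × List (ℕ × ℕ)) : (ℕ × ℕ) × List (ℕ × ℕ) :=
  ((r * p.1.1, r * p.1.2), p.2.map fun q => (r * q.1, r * q.2))

theorem reduceP_mul {r : ℕ} (hr : 0 < r) (a b : ℕ) :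
    reduceP (r * a, r * b) = reduceP (a, b) := by
  simp [reduceP, Nat.gcd_mul_left, Nat.mul_div_mul_left _ _ hr]

namespace LIndex

variable {u v r : ℕ} {p : (ℕ × ℕ) × List (ℕ × ℕ)}

theorem finite (u v : ℕ) : (LIndex u v).Finite := by
  have hbox := (Set.finite_Iic u).prod (Set.finite_Iic v)
  refine (hbox.prod (List.finite_length_le_of_forall_mem hbox u)).subset ?_
  rintro ⟨⟨u₀, v₀⟩, l⟩ ⟨-, hpos, hu, hv, -⟩
  simp only at hpos hu hv
  have hfst : ∀ q ∈ l, q.1 ≤ u := fun q hq =>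
    (List.le_sum_of_mem (List.mem_map_of_mem hq)).trans (by omega)
  have hsnd : ∀ q ∈ l, q.2 ≤ v := fun q hq =>
    (List.le_sum_of_mem (List.mem_map_of_mem hq)).trans (by omega)
  have hlen : l.length ≤ u := by
    have := (l.map Prod.fst).length_le_sum_of_one_le (by
      simpa only [List.mem_map, forall_exists_index, and_imp, forall_apply_eq_imp_iff₂]
        using fun q hq => Nat.succ_le_of_lt (hpos q hq).1)
    simp only [List.length_map] at this
    omega
  refine ⟨⟨?_, ?_⟩, hlen, fun q hq => ⟨hfst q hq, hsnd q hq⟩⟩ <;> simp only [Set.mem_Iic] <;>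
    omega

theorem top_mem (hu : 1 ≤ u) (hv : 1 ≤ v) : ((0, 0), [(u, v)]) ∈ LIndex u v :=
  ⟨by simp, by simp; omega, by simp, by simp, by simp⟩

theorem lt_of_ne_top (hp : p ∈ LIndex u v) (hne : p ≠ ((0, 0), [(u, v)])) {q : ℕ × ℕ}
    (hq : q ∈ p.2) : q.1 + q.2 < u + v := by
  obtain ⟨⟨u₀, v₀⟩, l⟩ := p
  obtain ⟨a, b⟩ := q
  obtain ⟨-, hpos, hu, hv, -⟩ := hp
  obtain ⟨l₁, l₂, rfl⟩ := List.append_of_mem hq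
  simp only [List.map_append, List.map_cons, List.sum_append, List.sum_cons] at hu hv
  dsimp only
  by_contra hge
  have hl₁ : (l₁.map Prod.fst).sum = 0 := by omega
  have hl₂ : (l₂.map Prod.fst).sum = 0 := by omega
  simp only [List.sum_eq_zero_iff, List.mem_map] at hl₁ hl₂
  rcases l₁ with _ | ⟨x, _⟩
  · rcases l₂ with _ | ⟨x, _⟩
    · simp only [List.map_nil, List.sum_nil] at hu hv
      exact hne (by simp only [List.nil_append, Prod.mk.injEq, List.cons.injEq, and_true]; omega)
    · exact absurd (hl₂ _ ⟨x, by simp⟩) (hpos x (by simp)).1.ne'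
  · exact absurd (hl₁ _ ⟨x, by simp⟩) (hpos x (by simp)).1.ne'

theorem scaleIndex_mem_iff (hr : 0 < r) :
    scaleIndex r p ∈ LIndex (r * u) (r * v) ↔ p ∈ LIndex u v := by
  simp only [LIndex, scaleIndex, Set.mem_ofPred_eq, ne_eq, List.map_eq_nil_iff,
    List.forall_mem_map, mul_pos_iff_of_pos_left hr, List.map_map, Function.comp_def,
    List.sum_map_mul_left, ← mul_add, mul_right_inj' hr.ne', reduceP_mul hr]

theorem dvd_of_scaleIndex_mem (hp : scaleIndex r p ∈ LIndex u v) : r ∣ u ∧ r ∣ v := by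
  obtain ⟨-, -, hu, hv, -⟩ := hp
  simp only [scaleIndex, List.map_map, Function.comp_def, List.sum_map_mul_left, ← mul_add]
    at hu hv
  exact ⟨⟨_, hu.symm⟩, ⟨_, hv.symm⟩⟩

def lowerFinset (u v : ℕ) : Finset ((ℕ × ℕ) × List (ℕ × ℕ)) :=
  (LIndex.finite u v).toFinset.erase ((0, 0), [(u, v)])

theorem mem_lowerFinset :
    p ∈ lowerFinset u v ↔ p ≠ ((0, 0), [(u, v)]) ∧ p ∈ LIndex u v := by
  simp [lowerFinset]

end LIndex

theorem scaleIndex_injective {r : ℕ} (hr : 0 < r) : Function.Injective (scaleIndex r) := by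
  have hpair : Function.Injective fun q : ℕ × ℕ => (r * q.1, r * q.2) := fun a b h => by
    simpa [Prod.ext_iff, hr.ne'] using h
  exact Prod.map_injective.2 ⟨hpair, List.map_injective_iff.2 hpair⟩

theorem exists_scaleIndex_eq {r : ℕ} {p : (ℕ × ℕ) × List (ℕ × ℕ)}
    (h : r ∣ p.1.1 ∧ r ∣ p.1.2 ∧ ∀ q ∈ p.2, r ∣ q.1 ∧ r ∣ q.2) : ∃ p', scaleIndex r p' = p := by
  have hq : ∀ q : ℕ × ℕ, r ∣ q.1 ∧ r ∣ q.2 → (r * (q.1 / r), r * (q.2 / r)) = q := fun q hq =>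
    Prod.ext (Nat.mul_div_cancel' hq.1) (Nat.mul_div_cancel' hq.2)
  refine ⟨((p.1.1 / r, p.1.2 / r), p.2.map fun q => (q.1 / r, q.2 / r)), Prod.ext ?_ ?_⟩
  · exact hq _ ⟨h.1, h.2.1⟩
  · simp only [scaleIndex, List.map_map, Function.comp_def]
    exact (List.map_congr_left fun q hq' => hq q (h.2.2 q hq')).trans (List.map_id _)

theorem scaleIndex_top (r u v : ℕ) :
    scaleIndex r ((0, 0), [(u, v)]) = ((0, 0), [(r * u, r * v)]) := by
  simp [scaleIndex]

theorem LTerm_top (L : ℕ → ℕ → TwoNSymm) (u v : ℕ) : LTerm L ((0, 0), [(u, v)]) = L u v := by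
  simp [LTerm, Xgen, Ygen]

theorem LIdentity.commutator_eq {L : ℕ → ℕ → TwoNSymm} (hL : LIdentity L) {u v : ℕ}
    (hu : 1 ≤ u) (hv : 1 ≤ v) :
    Xgen u * Ygen v - Ygen v * Xgen u =
      L u v + ∑ p ∈ LIndex.lowerFinset u v, LTerm L p := by
  have htop : ((0, 0), [(u, v)]) ∈ (LIndex.finite u v).toFinset := by
    simpa using LIndex.top_mem hu hv
  rw [← LTerm_top L u v, LIndex.lowerFinset, Finset.add_sum_erase _ _ htop,
    ← finsum_mem_coe_finset, Set.Finite.coe_toFinset]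
  exact hL u v hu hv

section Ver2L

variable {L : ℕ → ℕ → TwoNSymm} {r : ℕ} {p : (ℕ × ℕ) × List (ℕ × ℕ)}

theorem Ver2_LTerm_scaleIndex (hr : 0 < r)
    (h : ∀ q ∈ p.2, Ver2 r (L (r * q.1) (r * q.2)) = L q.1 q.2) :
    Ver2 r (LTerm L (scaleIndex r p)) = LTerm L p := by
  simp only [LTerm, scaleIndex, map_mul, map_list_prod, List.map_map, Function.comp_def,
    Ver2_Xgen, Ver2_Ygen, dvd_mul_right, if_true, Nat.mul_div_cancel_left _ hr]
  rw [List.map_congr_left h]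

theorem Ver2_LTerm_eq_zero (hp : p ∉ Set.range (scaleIndex r))
    (h : ∀ q ∈ p.2, Ver2 r (L q.1 q.2) = if r ∣ q.1 ∧ r ∣ q.2 then L (q.1 / r) (q.2 / r) else 0) :
    Ver2 r (LTerm L p) = 0 := by
  have hdvd : ¬ (r ∣ p.1.1 ∧ r ∣ p.1.2 ∧ ∀ q ∈ p.2, r ∣ q.1 ∧ r ∣ q.2) :=
    fun hd => hp (exists_scaleIndex_eq hd)
  simp only [not_and_or, not_forall] at hdvd
  rw [LTerm, map_mul, map_mul, Ver2_Xgen, Ver2_Ygen]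
  rcases hdvd with h₂ | h₁ | ⟨q, hq, hq'⟩
  · simp [h₂]
  · simp [h₁]
  · rw [map_list_prod, List.prod_eq_zero, mul_zero]
    refine List.mem_map.2 ⟨L q.1 q.2, List.mem_map_of_mem hq, ?_⟩
    rw [h q hq, if_neg (not_and_or.2 hq')]

theorem sum_LTerm_eq_sum_Ver2_LTerm (hr : 0 < r) {a b : ℕ}
    (h : ∀ p ∈ LIndex.lowerFinset (r * a) (r * b), ∀ q ∈ p.2,
      Ver2 r (L q.1 q.2) = if r ∣ q.1 ∧ r ∣ q.2 then L (q.1 / r) (q.2 / r) else 0) :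
    ∑ p ∈ LIndex.lowerFinset a b, LTerm L p =
      ∑ p ∈ LIndex.lowerFinset (r * a) (r * b), Ver2 r (LTerm L p) := by
  have hmaps : Set.MapsTo (scaleIndex r) (LIndex.lowerFinset a b)
      (LIndex.lowerFinset (r * a) (r * b)) := by
    intro p hp
    rw [Finset.mem_coe, LIndex.mem_lowerFinset] at hp ⊢
    rw [LIndex.scaleIndex_mem_iff hr, ← scaleIndex_top, (scaleIndex_injective hr).ne_iff]
    exact hp
  refine Finset.sum_of_injOn _ (scaleIndex_injective hr).injOn hmaps (fun p hp hnot => ?_)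
    (fun p hp => ?_)
  · refine Ver2_LTerm_eq_zero ?_ (h p hp)
    rintro ⟨p', rfl⟩
    rw [LIndex.mem_lowerFinset, LIndex.scaleIndex_mem_iff hr, ← scaleIndex_top,
      (scaleIndex_injective hr).ne_iff, ← LIndex.mem_lowerFinset] at hp
    exact hnot ⟨p', hp, rfl⟩
  · refine (Ver2_LTerm_scaleIndex hr fun q hq => ?_).symm
    rw [h _ (hmaps hp) (r * q.1, r * q.2) (List.mem_map_of_mem hq)]
    simp [Nat.mul_div_cancel_left _ hr]

theorem Ver2_L (hL : LIdentity L) (hr : 0 < r) {u v : ℕ} (hu : 1 ≤ u) (hv : 1 ≤ v) :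
    Ver2 r (L u v) = if r ∣ u ∧ r ∣ v then L (u / r) (v / r) else 0 := by
  induction hN : u + v using Nat.strong_induction_on generalizing u v with
  | _ N ih =>
  have hlower : ∀ p ∈ LIndex.lowerFinset u v, ∀ q ∈ p.2,
      Ver2 r (L q.1 q.2) = if r ∣ q.1 ∧ r ∣ q.2 then L (q.1 / r) (q.2 / r) else 0 := by
    intro p hp q hq
    obtain ⟨hne, hmem⟩ := LIndex.mem_lowerFinset.1 hp
    exact ih _ (hN ▸ LIndex.lt_of_ne_top hmem hne hq) (hmem.2.1 q hq).1 (hmem.2.1 q hq).2 rfl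
  have hcomm := congrArg (Ver2 r) (hL.commutator_eq hu hv)
  rw [map_add, map_sum] at hcomm
  split_ifs with hdvd
  · obtain ⟨⟨a, rfl⟩, ⟨b, rfl⟩⟩ := hdvd
    have ha : 1 ≤ a := Nat.pos_of_mul_pos_left hu
    have hb : 1 ≤ b := Nat.pos_of_mul_pos_left hv
    rw [← sum_LTerm_eq_sum_Ver2_LTerm hr hlower, map_sub, map_mul, map_mul, Ver2_Xgen,
      Ver2_Ygen] at hcomm
    simp only [dvd_mul_right, if_true, Nat.mul_div_cancel_left _ hr] at hcomm ⊢
    rw [hL.commutator_eq ha hb] at hcomm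
    exact (add_right_cancel hcomm).symm
  · have hzero : ∑ p ∈ LIndex.lowerFinset u v, Ver2 r (LTerm L p) = 0 := by
      refine Finset.sum_eq_zero fun p hp => Ver2_LTerm_eq_zero ?_ (hlower p hp)
      rintro ⟨p', rfl⟩
      exact hdvd (LIndex.dvd_of_scaleIndex_mem (LIndex.mem_lowerFinset.1 hp).2)
    rw [hzero, add_zero, map_sub, map_mul, map_mul, Ver2_Xgen, Ver2_Ygen] at hcomm
    rw [← hcomm]
    rcases not_and_or.1 hdvd with h | h <;> simp [h]

end Ver2L

theorem Nat.Coprime.dvd_mul_and_dvd_mul_iff {a b r k : ℕ} (h : Nat.Coprime a b) :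
    r ∣ k * a ∧ r ∣ k * b ↔ r ∣ k := by
  rw [← Nat.dvd_gcd_iff, Nat.gcd_mul_left, h.gcd_eq_one, mul_one]

section dSpec

variable {L : ℕ → ℕ → TwoNSymm} {d : List ℕ → ℕ → NSymm} {r : ℕ}

theorem dSpec.singleton (hd : dSpec L d) {n : ℕ} (hn : 0 < n) : d [n] = Zgen :=
  funext (hd.2.1 n hn)

theorem dSpec.eq_substXY (hd : dSpec L d) {l : List ℕ} {i : ℕ} (hl : IsLyndon l)
    (hi : IsSmallestProperTail l i) (k : ℕ) :
    d l k = substXY (d (l.take i)) (d (l.drop i))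
      (L (k * gcdL (l.take i) / gcdL l) (k * gcdL (l.drop i) / gcdL l)) :=
  hd.2.2 l hl (by have := hi.1; have := hi.2.1; omega) i hi.1 hi.2.1 hi.2.2 k

theorem dSpec.map_mul (hd : dSpec L d) (hr : 0 < r) :
    ∀ l, IsLyndon l → d (l.map (r * ·)) = d l := by
  refine IsLyndon.induction_on (fun n hn => ?_) (fun l i hl _ hi ih₁ ih₂ => funext fun k => ?_)
  · rw [List.map_singleton, hd.singleton hn, hd.singleton (Nat.mul_pos hr hn)]
  · rw [hd.eq_substXY ((isLyndon_map_mul_iff hr).2 hl)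
      ((isSmallestProperTail_map_mul_iff hr).2 hi), hd.eq_substXY hl hi, ← List.map_take,
      ← List.map_drop, ih₁, ih₂, gcdL_map_mul, gcdL_map_mul, gcdL_map_mul, mul_left_comm k,
      mul_left_comm k, Nat.mul_div_mul_left _ _ hr, Nat.mul_div_mul_left _ _ hr]

theorem dSpec.isVerCompatible (hL : LIdentity L) (hd : dSpec L d) (hr : 0 < r) :
    ∀ l, IsLyndon l → IsVerCompatible r (d l) := by
  refine IsLyndon.induction_on (fun n hn => ?_)
    (fun l i hl _ hi ih₁ ih₂ => ⟨hd.1 l hl, fun k => ?_⟩)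
  · rw [hd.singleton hn]
    exact ⟨rfl, Ver_Zgen r⟩
  obtain ⟨a, b, hcop, ha, hb⟩ := Nat.exists_coprime (gcdL (l.take i)) (gcdL (l.drop i))
  rw [← gcdL_append, List.take_append_drop] at ha hb
  have hg := gcdL_pos hl.1
  have hd' : ∀ m, d l m = substXY (d (l.take i)) (d (l.drop i)) (L (m * a) (m * b)) := by
    intro m
    rw [hd.eq_substXY hl hi, ha, hb, ← mul_assoc, ← mul_assoc, Nat.mul_div_cancel _ hg,
      Nat.mul_div_cancel _ hg]
  rcases k.eq_zero_or_pos with rfl | hk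
  · simp [hd.1 l hl]
  have ha0 : 0 < a := Nat.pos_of_mul_pos_right (ha ▸ gcdL_pos (hl.take hi).1)
  have hb0 : 0 < b := Nat.pos_of_mul_pos_right (hb ▸ gcdL_pos (hl.drop hi).1)
  rw [hd', ← AlgHom.comp_apply, Ver_comp_substXY ih₁ ih₂, AlgHom.comp_apply,
    Ver2_L hL hr (Nat.mul_pos hk ha0) (Nat.mul_pos hk hb0)]
  simp only [hcop.dvd_mul_and_dvd_mul_iff]
  split_ifs with hrk
  · rw [hd', Nat.div_mul_right_comm hrk, Nat.div_mul_right_comm hrk]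
  · exact map_zero _

end dSpec

/-- Behaviour of the basis primitives `P_α` under the Verschiebung morphisms. -/
theorem verschiebung_P_alpha (L : ℕ → ℕ → TwoNSymm) (hL : LIdentity L)
    (d : List ℕ → ℕ → NSymm) (hd : dSpec L d)
    (α : List ℕ) (hα : IsLyndon α) (r : ℕ) (hr : 1 ≤ r) :
    (r ∣ gcdL α →
      IsLyndon (α.map (· / r)) ∧
      Ver r (Pof d α) = (r : ℤ) • Pof d (α.map (· / r))) ∧
    (¬ r ∣ gcdL α → Ver r (Pof d α) = 0) := by
  have hV : Ver r (Pof d α) = substZ (d α) (Ver r (NewtonP (gcdL α))) := by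
    rw [Pof, ← AlgHom.comp_apply, Ver_comp_substZ (hd.isVerCompatible hL hr α hα),
      AlgHom.comp_apply]
  refine ⟨fun hdvd => ?_, fun hndvd => by rw [hV, Ver_NewtonP_of_not_dvd hndvd, map_zero]⟩
  obtain ⟨β, rfl⟩ : ∃ β, α = β.map (r * ·) :=
    ⟨α.map (· / r), (List.map_mul_map_div (dvd_gcdL_iff.1 hdvd)).symm⟩
  have hβ : IsLyndon β := (isLyndon_map_mul_iff hr).1 hα
  have hdiv : (β.map (r * ·)).map (· / r) = β := by
    simp [Function.comp_def, Nat.mul_div_cancel_left _ hr]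
  rw [hdiv, hV, gcdL_map_mul, Ver_NewtonP_mul hr, map_zsmul, hd.map_mul hr β hβ]
  exact ⟨hβ, rfl⟩

end
end

section
/- For every prime number p and every composition α = [a₁, ..., a_k], M_{[p·a₁, ..., p·a_k]} ≡ (M_α)^p (mod p); that is, M_{pα} − (M_α)^p ∈ p·R. -/
open scoped TensorProduct

noncomputable section

/-! Over `ZMod p`, where the Frobenius is the identity, `f ^ p = expand p f` for every power
series `f`, and `M_{pα} = expand p M_α` because a monomial has shape `pα` exactly when it is
the `p`-th power of a monomial of shape `α`. Hence every coefficient of `M_{pα} - M_α ^ p` is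
divisible by `p`, and the quotient is homogeneous of degree `p·|α|`, like `M_{pα} - M_α ^ p`. -/

theorem Finsupp.exists_eq_nsmul_of_forall_dvd {σ : Type*} {p : ℕ} {m : σ →₀ ℕ}
    (h : ∀ i, p ∣ m i) :
    ∃ n : σ →₀ ℕ, m = p • n :=
  ⟨Finsupp.mapRange (· / p) (Nat.zero_div p) m, Finsupp.ext fun i => by
    simp [Nat.mul_div_cancel' (h i)]⟩

namespace MvPowerSeries

variable {σ R : Type*}

theorem exists_eq_C_mul_of_forall_dvd_coeff [CommSemiring R] {a : R} {f : MvPowerSeries σ R}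
    (h : ∀ m, a ∣ coeff m f) : ∃ q, f = C a * q := by
  choose q hq using h
  exact ⟨q, ext fun m => (hq m).trans (coeff_C_mul m q a).symm⟩

section IsHomogeneous

variable [CommRing R] {f g : MvPowerSeries σ R} {n : ℕ}

theorem IsHomogeneous.degree_eq (hf : f.IsHomogeneous n) {d : σ →₀ ℕ}
    (hd : coeff d f ≠ 0) :
    d.degree = n := by
  by_contra h
  exact hd (hf.coeff_eq_zero h)

theorem isHomogeneous_of_degree_eq (h : ∀ d, coeff d f ≠ 0 → d.degree = n) :
    f.IsHomogeneous n := fun {d} hd => by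
  have := h d hd
  rwa [Finsupp.degree_eq_weight_one] at this

theorem isHomogeneous_one : (1 : MvPowerSeries σ R).IsHomogeneous 0 := by
  classical
  refine isHomogeneous_of_degree_eq fun d hd => ?_
  obtain rfl : d = 0 := by
    by_contra h
    simp [coeff_one, h] at hd
  exact map_zero _

theorem IsHomogeneous.pow (hf : f.IsHomogeneous n) (k : ℕ) : (f ^ k).IsHomogeneous (k * n) := by
  induction k with
  | zero => rw [pow_zero, zero_mul]; exact isHomogeneous_one
  | succ k ih =>
    rw [pow_succ, add_mul, one_mul]
    exact ih.mul hf

theorem IsHomogeneous.sub (hf : f.IsHomogeneous n) (hg : g.IsHomogeneous n) :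
    (f - g).IsHomogeneous n := by
  refine isHomogeneous_of_degree_eq fun d hd => by_contra fun h => hd ?_
  rw [map_sub, hf.coeff_eq_zero h, hg.coeff_eq_zero h, sub_zero]

theorem IsHomogeneous.of_C_mul [NoZeroDivisors R] {a : R} (ha : a ≠ 0)
    (h : (C a * f).IsHomogeneous n) : f.IsHomogeneous n :=
  isHomogeneous_of_degree_eq fun d hd => h.degree_eq (by simpa [coeff_C_mul, ha] using hd)

end IsHomogeneous

end MvPowerSeries

open MvPowerSeries

def monomialShape (m : ℕ →₀ ℕ) : List ℕ := (m.support.sort (· ≤ ·)).map m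

theorem coeff_Mq (α : List ℕ) (m : ℕ →₀ ℕ) :
    coeff m (Mq α) = if monomialShape m = α then 1 else 0 := rfl

theorem monomialShape_eq_of_coeff_Mq_ne_zero {α : List ℕ} {m : ℕ →₀ ℕ}
    (h : coeff m (Mq α) ≠ 0) : monomialShape m = α :=
  of_not_not fun h' => h (if_neg h')

theorem degree_eq_sum_monomialShape (m : ℕ →₀ ℕ) : m.degree = (monomialShape m).sum := by
  rw [Finsupp.degree_apply, monomialShape, ← Finset.sum_map_val,
    ← Finset.sort_eq m.support (· ≤ ·)]
  rfl

theorem isHomogeneous_Mq (α : List ℕ) : (Mq α).IsHomogeneous α.sum :=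
  isHomogeneous_of_degree_eq fun m hm => by
    rw [degree_eq_sum_monomialShape, monomialShape_eq_of_coeff_Mq_ne_zero hm]

theorem monomialShape_nsmul {p : ℕ} (hp : p ≠ 0) (m : ℕ →₀ ℕ) :
    monomialShape (p • m) = (monomialShape m).map (p * ·) := by
  rw [monomialShape, monomialShape, Finsupp.support_smul_eq hp, List.map_map]
  rfl

theorem dvd_of_monomialShape_eq_map_mul {p : ℕ} {α : List ℕ} {m : ℕ →₀ ℕ}
    (h : monomialShape m = α.map (p * ·)) (i : ℕ) : p ∣ m i := by
  by_cases hi : i ∈ m.support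
  · have hmem : m i ∈ monomialShape m := List.mem_map_of_mem ((Finset.mem_sort _).2 hi)
    obtain ⟨a, -, ha⟩ := List.mem_map.1 (h ▸ hmem)
    exact ⟨a, ha.symm⟩
  · rw [Finsupp.notMem_support_iff.1 hi]
    exact dvd_zero p

theorem Mq_map_mul_eq_expand {p : ℕ} (hp : p ≠ 0) (α : List ℕ) :
    Mq (α.map (p * ·)) = expand p hp (Mq α) := by
  ext m
  by_cases hdvd : ∀ i, p ∣ m i
  · obtain ⟨n, rfl⟩ := Finsupp.exists_eq_nsmul_of_forall_dvd hdvd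
    simp only [coeff_expand_smul, coeff_Mq, monomialShape_nsmul hp,
      (List.map_injective_iff.2 (mul_right_injective₀ hp)).eq_iff]
  · obtain ⟨i, hi⟩ := not_forall.1 hdvd
    rw [coeff_expand_of_not_dvd p hp _ hi, coeff_Mq,
      if_neg fun h => hi (dvd_of_monomialShape_eq_map_mul h i)]

theorem map_Mq_map_mul_eq_pow (p : ℕ) [Fact p.Prime] (α : List ℕ) :
    map (Int.castRingHom (ZMod p)) (Mq (α.map (p * ·))) =
      map (Int.castRingHom (ZMod p)) (Mq α) ^ p := by
  have hp : p ≠ 0 := (Fact.out : p.Prime).ne_zero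
  rw [Mq_map_mul_eq_expand hp, map_expand, ← map_frobenius_expand p hp,
    ZMod.frobenius_zmod, map_id]
  rfl

theorem frobenius_mod_p_general (p : ℕ) (hp : p.Prime) (α : List ℕ) :
    ∃ q : MvPowerSeries ℕ ℤ,
      (∃ D : ℕ, ∀ m : ℕ →₀ ℕ, MvPowerSeries.coeff m q ≠ 0 → degm m ≤ D) ∧
      Mq (α.map (p * ·)) - (Mq α) ^ p = (p : MvPowerSeries ℕ ℤ) * q := by
  have := Fact.mk hp
  have hdvd : ∀ m, (p : ℤ) ∣ coeff m (Mq (α.map (p * ·)) - Mq α ^ p) := fun m => by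
    rw [← ZMod.intCast_zmod_eq_zero_iff_dvd, ← eq_intCast (Int.castRingHom (ZMod p)),
      ← coeff_map, map_sub, map_pow, map_Mq_map_mul_eq_pow, sub_self, map_zero]
  obtain ⟨q, hq⟩ := exists_eq_C_mul_of_forall_dvd_coeff hdvd
  have hsum : (α.map (p * ·)).sum = p * α.sum := by
    rw [List.sum_map_mul_left, List.map_id']
  have hhom : (Mq (α.map (p * ·)) - Mq α ^ p).IsHomogeneous (p * α.sum) :=
    IsHomogeneous.sub (hsum ▸ isHomogeneous_Mq _) (IsHomogeneous.pow (isHomogeneous_Mq α) p)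
  rw [hq] at hhom
  have hq_hom : q.IsHomogeneous (p * α.sum) :=
    IsHomogeneous.of_C_mul (by exact_mod_cast hp.ne_zero) hhom
  exact ⟨q, ⟨p * α.sum, fun m hm => (hq_hom.degree_eq hm).le⟩, by rw [hq, map_natCast]⟩

/-- For a prime `p` and a composition `α`, `M_{pα} ≡ (M_α)^p (mod p·R)`,
where `R` is the ring of power series of bounded degree. -/
theorem frobenius_mod_p (p : ℕ) (hp : p.Prime) (α : List ℕ) (hα : IsComposition α) :
    ∃ q : MvPowerSeries ℕ ℤ,
      (∃ D : ℕ, ∀ m : ℕ →₀ ℕ, MvPowerSeries.coeff m q ≠ 0 → degm m ≤ D) ∧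
      Mq (α.map (p * ·)) - (Mq α) ^ p = (p : MvPowerSeries ℕ ℤ) * q :=
  frobenius_mod_p_general p hp α

end
end

section
/- There is a unique family of elements N_{u,v} ∈ NSymm (u, v ≥ 1) such that for all u, v ≥ 1: C(u+v, u) · Z_{u+v} = ∑ Z_{u₀} Z_{v₀} N_{u₁,v₁} ··· N_{u_k,v_k}, where C(u+v, u) is the binomial coefficient, and the sum is over all k ≥ 0, u₀, v₀ ≥ 0 and u_i, v_i ≥ 1 (1 ≤ i ≤ k) with u₀ + u₁ + ··· + u_k = u and v₀ + v₁ + ··· + v_k = v (Z₀ = 1), subject to the condition that the reduced pairs (u_i/gcd(u_i,v_i), v_i/gcd(u_i,v_i)), i = 1, ..., k, are strictly increasing in the order <_wl. Moreover: (i) N_{u,v} − C(u+v,u)·Z_{u+v} is a ℤ-linear combination of monomials of length at least 2; (ii) N_{u,v} is homogeneous of weight u + v; (iii) for each pair a, b ≥ 1 with gcd(a,b) = 1, the sequence 1, N_{a,b}, N_{2a,2b}, N_{3a,3b}, ... is a curve in NSymm. -/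
open scoped TensorProduct

noncomputable section

/-!
The identity for `(u, v)` contains `N_{u,v}` exactly once, as the term of the index
`((0, 0), [(u, v)])`; every other term only involves `N_{u',v'}` with `u' + v' < u + v`. So the
identities determine the `N_{u,v}` recursively, in any ring and for any choice of the `Z_n`, and
induction along this recursion gives the leading term and homogeneity.

For the curve property let `g = gcd(u, v)` and `(a, b) = (u, v) / g`, and put
`M_{u,v} = ∑_{j ≤ g} N_{ja,jb} ⊗ N_{(g-j)a,(g-j)b}` (with `N_{0,0} = 1`). Applying `Δ` to the
identity shows that the `Δ N_{u,v}` satisfy it with `Δ Z_n` in place of `Z_n`. The `M_{u,v}`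
satisfy it as well: expanding a product of `M`s splits each factor `N_{u_i,v_i}` into two
multiples of its reduced pair, and since the reduced pairs of an index are strictly increasing,
merging two such lists inverts the splitting. Hence the expanded left side is
`∑ (C(u₁+v₁,u₁) Z_{u₁+v₁}) ⊗ (C(u₂+v₂,u₂) Z_{u₂+v₂})` over `u₁ + u₂ = u`, `v₁ + v₂ = v`, which is
`C(u+v,u) Δ Z_{u+v}` by Vandermonde's identity. By uniqueness, `Δ N_{u,v} = M_{u,v}`.
-/

namespace SecondIsobaric

open Finset Pointwise

instance : DecidableRel wlLt := fun _ _ => by unfold wlLt; infer_instance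

lemma wlLt_irrefl (k : ℕ × ℕ) : ¬ wlLt k k := by unfold wlLt; omega

lemma wlLt_trans {k k' k'' : ℕ × ℕ} (h : wlLt k k') (h' : wlLt k' k'') : wlLt k k'' := by
  unfold wlLt at *; omega

lemma wlLt_asymm {k k' : ℕ × ℕ} (h : wlLt k k') : ¬ wlLt k' k := by unfold wlLt at *; omega

lemma wlLt_or_wlLt_of_ne {k k' : ℕ × ℕ} (h : k ≠ k') : wlLt k k' ∨ wlLt k' k := by
  obtain ⟨a, b⟩ := k
  obtain ⟨c, d⟩ := k'
  simp only [ne_eq, Prod.mk.injEq] at h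
  unfold wlLt; omega

section reduceP

variable {q q' : ℕ × ℕ}

lemma gcd_mul_reduceP_fst (q : ℕ × ℕ) : q.1.gcd q.2 * (reduceP q).1 = q.1 :=
  Nat.mul_div_cancel' (Nat.gcd_dvd_left _ _)

lemma gcd_mul_reduceP_snd (q : ℕ × ℕ) : q.1.gcd q.2 * (reduceP q).2 = q.2 :=
  Nat.mul_div_cancel' (Nat.gcd_dvd_right _ _)

lemma reduceP_fst_pos (h : 0 < q.1) : 0 < (reduceP q).1 :=
  Nat.div_pos (Nat.gcd_le_left _ h) (Nat.gcd_pos_of_pos_left _ h)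

lemma reduceP_snd_pos (h : 0 < q.2) : 0 < (reduceP q).2 :=
  Nat.div_pos (Nat.gcd_le_right _ h) (Nat.gcd_pos_of_pos_right _ h)

lemma coprime_reduceP (h : 0 < q.1) : Nat.Coprime (reduceP q).1 (reduceP q).2 :=
  Nat.coprime_div_gcd_div_gcd (Nat.gcd_pos_of_pos_left _ h)

lemma reduceP_mul {a b j : ℕ} (hab : Nat.Coprime a b) (hj : 0 < j) :
    reduceP (j * a, j * b) = (a, b) := by
  simp only [reduceP, Nat.gcd_mul_left, hab.gcd_eq_one, mul_one, Nat.mul_div_cancel_left _ hj]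

lemma eq_mul_reduceP (q : ℕ × ℕ) : q = (q.1.gcd q.2 * (reduceP q).1, q.1.gcd q.2 * (reduceP q).2) :=
  Prod.ext (gcd_mul_reduceP_fst q).symm (gcd_mul_reduceP_snd q).symm

lemma add_eq_mul_reduceP (hk : reduceP q = reduceP q') :
    q + q' = ((q.1.gcd q.2 + q'.1.gcd q'.2) * (reduceP q).1,
      (q.1.gcd q.2 + q'.1.gcd q'.2) * (reduceP q).2) := by
  conv_lhs => rw [eq_mul_reduceP q, eq_mul_reduceP q', ← hk]
  simp only [Prod.mk_add_mk, add_mul]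

lemma reduceP_add (h : 0 < q.1) (hk : reduceP q = reduceP q') : reduceP (q + q') = reduceP q := by
  rw [add_eq_mul_reduceP hk, reduceP_mul (coprime_reduceP h) (by
    have := Nat.gcd_pos_of_pos_left q.2 h; omega)]

lemma gcd_add (h : 0 < q.1) (hk : reduceP q = reduceP q') :
    (q + q').1.gcd (q + q').2 = q.1.gcd q.2 + q'.1.gcd q'.2 := by
  rw [add_eq_mul_reduceP hk, Nat.gcd_mul_left, (coprime_reduceP h).gcd_eq_one, mul_one]

end reduceP

section IndexSet

/-- `((u₀, v₀), [(u₁, v₁), …, (u_k, v_k)])` indexes the term `Z_{u₀} Z_{v₀} N_{u₁,v₁} ⋯ N_{u_k,v_k}`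
of the identity; `IsIndex u v` below is the summation condition of `NIdentity`. -/
abbrev Index : Type := (ℕ × ℕ) × List (ℕ × ℕ)

def IsKeySorted (L : List (ℕ × ℕ)) : Prop :=
  (∀ q ∈ L, 0 < q.1 ∧ 0 < q.2) ∧ (L.map reduceP).Pairwise wlLt

def IsIndex (u v : ℕ) (p : Index) : Prop :=
  (∀ q ∈ p.2, 0 < q.1 ∧ 0 < q.2) ∧
    p.1.1 + (p.2.map Prod.fst).sum = u ∧
    p.1.2 + (p.2.map Prod.snd).sum = v ∧
    (p.2.map reduceP).Pairwise wlLt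

lemma IsIndex.isKeySorted {u v : ℕ} {p : Index} (hp : IsIndex u v p) :
    IsKeySorted p.2 :=
  ⟨hp.1, hp.2.2.2⟩

lemma finite_setOf_isIndex (u v : ℕ) : {p | IsIndex u v p}.Finite := by
  set S : Set (ℕ × ℕ) := Set.Iic u ×ˢ Set.Iic v
  have hS : S.Finite := (Set.finite_Iic u).prod (Set.finite_Iic v)
  have : Finite S := hS.to_subtype
  refine (hS.prod ((List.finite_length_le S u).image (List.map Subtype.val))).subset ?_
  rintro ⟨⟨u₀, v₀⟩, L⟩ ⟨hpos, hu, hv, -⟩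
  dsimp only at hpos hu hv
  have hL : ∀ q ∈ L, q ∈ S := fun q hq =>
    ⟨(List.le_sum_of_mem (List.mem_map_of_mem (f := Prod.fst) hq)).trans (by omega),
      (List.le_sum_of_mem (List.mem_map_of_mem (f := Prod.snd) hq)).trans (by omega)⟩
  have hlen : L.length ≤ u := by
    have := List.length_le_sum_of_one_le (L.map Prod.fst) fun i hi => by
      obtain ⟨q, hq, rfl⟩ := List.mem_map.1 hi
      exact (hpos q hq).1
    simp only [List.length_map] at this
    omega
  refine ⟨⟨show u₀ ≤ u by omega, show v₀ ≤ v by omega⟩, ?_⟩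
  lift L to List S using hL
  exact ⟨L, by simpa using hlen, rfl⟩

def indexFinset (u v : ℕ) : Finset Index :=
  (finite_setOf_isIndex u v).toFinset

lemma mem_indexFinset {u v : ℕ} {p : Index} :
    p ∈ indexFinset u v ↔ IsIndex u v p :=
  Set.Finite.mem_toFinset _

def diagIndex (u v : ℕ) : Index := ((0, 0), [(u, v)])

lemma diagIndex_mem_indexFinset {u v : ℕ} (hu : 1 ≤ u) (hv : 1 ≤ v) :
    diagIndex u v ∈ indexFinset u v :=
  mem_indexFinset.2 ⟨by simp [diagIndex]; omega, by simp [diagIndex], by simp [diagIndex],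
    by simp [diagIndex]⟩

lemma eq_nil_of_sum_map_eq_zero {f : ℕ × ℕ → ℕ} {L : List (ℕ × ℕ)} (hpos : ∀ q ∈ L, 0 < f q)
    (h : (L.map f).sum = 0) : L = [] :=
  List.eq_nil_iff_forall_not_mem.2 fun q hq =>
    (hpos q hq).ne' (List.sum_eq_zero_iff.1 h _ (List.mem_map_of_mem hq))

lemma add_lt_of_mem_of_isIndex {u v : ℕ} {p : Index} (hp : IsIndex u v p)
    (hne : p ≠ diagIndex u v) {q : ℕ × ℕ} (hq : q ∈ p.2) : q.1 + q.2 < u + v := by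
  obtain ⟨⟨u₀, v₀⟩, L⟩ := p
  obtain ⟨hpos, hu, hv, -⟩ := hp
  obtain ⟨s, t, rfl⟩ := List.append_of_mem hq
  simp only [List.map_append, List.map_cons, List.sum_append, List.sum_cons] at hu hv
  by_contra hle
  obtain rfl : s = [] := eq_nil_of_sum_map_eq_zero (f := Prod.fst)
    (fun r hr => (hpos r (by simp [hr])).1) (by omega)
  obtain rfl : t = [] := eq_nil_of_sum_map_eq_zero (f := Prod.fst)
    (fun r hr => (hpos r (by simp [hr])).1) (by omega)
  simp only [List.map_nil, List.sum_nil, zero_add, add_zero] at hu hv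
  obtain rfl : q = (u, v) := Prod.ext (by omega) (by omega)
  obtain rfl : u₀ = 0 := by omega
  obtain rfl : v₀ = 0 := by omega
  exact hne rfl

lemma induction_on_index {P : ℕ → ℕ → Prop}
    (h : ∀ u v, 1 ≤ u → 1 ≤ v →
      (∀ p ∈ (indexFinset u v).erase (diagIndex u v), ∀ q ∈ p.2, P q.1 q.2) → P u v) :
    ∀ u v, 1 ≤ u → 1 ≤ v → P u v := by
  intro u v
  induction hn : u + v using Nat.strong_induction_on generalizing u v with
  | _ n ih =>
    intro hu hv
    refine h u v hu hv fun p hp q hq => ?_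
    have hpI := mem_indexFinset.1 (mem_of_mem_erase hp)
    exact ih _ (hn ▸ add_lt_of_mem_of_isIndex hpI (ne_of_mem_erase hp) hq) q.1 q.2 rfl
      (hpI.1 q hq).1 (hpI.1 q hq).2

end IndexSet

section Terms

variable {H : Type*}

def indexTerm [Monoid H] (Z : ℕ → H) (M : ℕ → ℕ → H) (p : Index) : H :=
  Z p.1.1 * Z p.1.2 * (p.2.map fun q => M q.1 q.2).prod

lemma indexTerm_congr [Monoid H] {Z : ℕ → H} {M M' : ℕ → ℕ → H} {p : Index}
    (h : ∀ q ∈ p.2, M q.1 q.2 = M' q.1 q.2) : indexTerm Z M p = indexTerm Z M' p := by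
  rw [indexTerm, indexTerm, List.map_congr_left h]

lemma map_indexTerm [Monoid H] {H' F : Type*} [Monoid H'] [FunLike F H H'] [MonoidHomClass F H H']
    (f : F) (Z : ℕ → H) (M : ℕ → ℕ → H)
    (p : Index) :
    f (indexTerm Z M p) = indexTerm (fun n => f (Z n)) (fun a b => f (M a b)) p := by
  simp only [indexTerm, map_mul, map_list_prod, List.map_map, Function.comp_def]

lemma sum_indexTerm_eq_add [Semiring H] {Z : ℕ → H} (hZ : Z 0 = 1) (M : ℕ → ℕ → H) {u v : ℕ}
    (hu : 1 ≤ u) (hv : 1 ≤ v) :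
    ∑ p ∈ indexFinset u v, indexTerm Z M p =
      M u v + ∑ p ∈ (indexFinset u v).erase (diagIndex u v), indexTerm Z M p := by
  rw [← add_sum_erase _ _ (diagIndex_mem_indexFinset hu hv)]
  simp [indexTerm, diagIndex, hZ]

lemma eq_of_sum_indexTerm_eq [Ring H] {Z : ℕ → H} (hZ : Z 0 = 1) {M M' : ℕ → ℕ → H}
    (h : ∀ u v, 1 ≤ u → 1 ≤ v →
      ∑ p ∈ indexFinset u v, indexTerm Z M p = ∑ p ∈ indexFinset u v, indexTerm Z M' p) :
    ∀ u v, 1 ≤ u → 1 ≤ v → M u v = M' u v :=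
  induction_on_index fun u v hu hv ih => by
    have huv := h u v hu hv
    rw [sum_indexTerm_eq_add hZ M hu hv, sum_indexTerm_eq_add hZ M' hu hv,
      sum_congr rfl fun p hp => indexTerm_congr (ih p hp)] at huv
    exact add_right_cancel huv

end Terms

lemma nidentity_iff {N : ℕ → ℕ → NSymm} :
    NIdentity N ↔ ∀ u v, 1 ≤ u → 1 ≤ v →
      ((u + v).choose u : ℤ) • Zgen (u + v) = ∑ p ∈ indexFinset u v, indexTerm Zgen N p :=
  forall₄_congr fun u v _ _ => by
    rw [indexFinset, ← finsum_mem_eq_finite_toFinset_sum]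
    rfl

lemma eq_sub_of_nidentity {N : ℕ → ℕ → NSymm} (hN : NIdentity N) {u v : ℕ} (hu : 1 ≤ u)
    (hv : 1 ≤ v) :
    N u v = ((u + v).choose u : ℤ) • Zgen (u + v) -
      ∑ p ∈ (indexFinset u v).erase (diagIndex u v), indexTerm Zgen N p := by
  rw [nidentity_iff.1 hN u v hu hv, sum_indexTerm_eq_add rfl N hu hv, add_sub_cancel_right]

def isobaricN (u v : ℕ) : NSymm :=
  ((u + v).choose u : ℤ) • Zgen (u + v) -
    ∑ p ∈ ((indexFinset u v).erase (diagIndex u v)).attach,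
      Zgen p.1.1.1 * Zgen p.1.1.2 * (p.1.2.attach.map fun q => isobaricN q.1.1 q.1.2).prod
termination_by u + v
decreasing_by
  exact add_lt_of_mem_of_isIndex (mem_indexFinset.1 (mem_of_mem_erase p.2))
    (ne_of_mem_erase p.2) q.2

lemma isobaricN_eq (u v : ℕ) :
    isobaricN u v = ((u + v).choose u : ℤ) • Zgen (u + v) -
      ∑ p ∈ (indexFinset u v).erase (diagIndex u v), indexTerm Zgen isobaricN p := by
  rw [isobaricN, ← sum_attach ((indexFinset u v).erase (diagIndex u v))]
  congr 1
  refine sum_congr rfl fun p _ => ?_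
  simp only [indexTerm, List.attach_map_val (f := fun q : ℕ × ℕ => isobaricN q.1 q.2)]

lemma nidentity_isobaricN : NIdentity isobaricN :=
  nidentity_iff.2 fun u v hu hv => by
    rw [sum_indexTerm_eq_add rfl _ hu hv, isobaricN_eq u v, sub_add_cancel]

section Supported

open MonoidAlgebra

variable {R M : Type*} [Semiring R]

lemma single_mem_supported {s : Set M} {m : M} (r : R) (hm : m ∈ s) :
    single m r ∈ supported R R s := by
  rw [mem_supported, coeff_single]
  exact (Finset.coe_subset.2 Finsupp.support_single_subset).trans (by simpa using hm)

lemma mem_of_mem_supported {s : Set M} {x : MonoidAlgebra R M} (h : x ∈ supported R R s) {m : M}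
    (hm : x.coeff m ≠ 0) : m ∈ s :=
  by_contra fun hs => hm (mem_supported'.1 h m hs)

lemma mul_mem_supported [Mul M] {s t : Set M} {x y : MonoidAlgebra R M} (hx : x ∈ supported R R s)
    (hy : y ∈ supported R R t) : x * y ∈ supported R R (s * t) := by
  classical
  rw [mem_supported] at *
  exact (Finset.coe_subset.2 (support_coeff_mul_subset x y)).trans
    (by rw [Finset.coe_mul]; exact Set.mul_subset_mul hx hy)

variable [Monoid M] (S : ℕ → Set M) (hS₀ : 1 ∈ S 0) (hS : ∀ a b, S a * S b ⊆ S (a + b))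
include hS₀ hS

lemma list_prod_mem_supported {ι : Type*} (L : List ι) {f : ι → MonoidAlgebra R M} {g : ι → ℕ}
    (h : ∀ i ∈ L, f i ∈ supported R R (S (g i))) :
    (L.map f).prod ∈ supported R R (S (L.map g).sum) := by
  induction L with
  | nil => exact single_mem_supported 1 hS₀
  | cons i L ih =>
    exact supported_mono (hS _ _) (mul_mem_supported (h i (by simp))
      (ih fun j hj => h j (by simp [hj])))

lemma indexTerm_mem_supported {Z : ℕ → MonoidAlgebra R M} {N : ℕ → ℕ → MonoidAlgebra R M}
    {gZ : ℕ → ℕ} {gN : ℕ × ℕ → ℕ} (hZ : ∀ n, Z n ∈ supported R R (S (gZ n)))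
    {p : Index} (hN : ∀ q ∈ p.2, N q.1 q.2 ∈ supported R R (S (gN q))) :
    indexTerm Z N p ∈ supported R R (S (gZ p.1.1 + gZ p.1.2 + (p.2.map gN).sum)) :=
  supported_mono (hS _ _) (mul_mem_supported
    (supported_mono (hS _ _) (mul_mem_supported (hZ _) (hZ _)))
    (list_prod_mem_supported S hS₀ hS p.2 hN))

end Supported

section Weight

open MonoidAlgebra

def weightEq (n : ℕ) : Set (FreeMonoid ℕ) := {w | wtWord w = n}

def lengthGe (n : ℕ) : Set (FreeMonoid ℕ) := {w | n ≤ w.length}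

lemma one_mem_weightEq : (1 : FreeMonoid ℕ) ∈ weightEq 0 := rfl

lemma weightEq_mul_subset (a b : ℕ) : weightEq a * weightEq b ⊆ weightEq (a + b) :=
  Set.mul_subset_iff.2 fun x (hx : wtWord x = a) y (hy : wtWord y = b) =>
    show wtWord (x * y) = a + b by
      simp only [wtWord, FreeMonoid.toList_mul, List.sum_append, List.length_append] at *
      omega

lemma one_mem_lengthGe : (1 : FreeMonoid ℕ) ∈ lengthGe 0 := Nat.zero_le _

lemma lengthGe_mul_subset (a b : ℕ) : lengthGe a * lengthGe b ⊆ lengthGe (a + b) :=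
  Set.mul_subset_iff.2 fun x (hx : a ≤ x.length) y (hy : b ≤ y.length) =>
    show a + b ≤ (x * y).length by rw [FreeMonoid.length_mul]; omega

lemma lengthGe_anti {a b : ℕ} (h : a ≤ b) : lengthGe b ⊆ lengthGe a := fun _ hw => h.trans hw

lemma Zgen_eq_single (n : ℕ) :
    Zgen n = single (if n = 0 then 1 else FreeMonoid.of (n - 1)) 1 := by
  cases n <;> rfl

lemma Zgen_mem_weightEq (n : ℕ) : Zgen n ∈ supported ℤ ℤ (weightEq n) := by
  rw [Zgen_eq_single]
  refine single_mem_supported 1 ?_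
  cases n <;> simp [weightEq, wtWord]

lemma Zgen_mem_lengthGe (n : ℕ) : Zgen n ∈ supported ℤ ℤ (lengthGe (min n 1)) := by
  rw [Zgen_eq_single]
  refine single_mem_supported 1 ?_
  cases n <;> simp [lengthGe]

lemma two_le_of_isIndex {u v : ℕ} (hu : 1 ≤ u) (hv : 1 ≤ v) {p : Index}
    (hp : IsIndex u v p) (hne : p ≠ diagIndex u v) :
    2 ≤ min p.1.1 1 + min p.1.2 1 + (p.2.map fun _ => 1).sum := by
  obtain ⟨⟨u₀, v₀⟩, L⟩ := p
  obtain ⟨-, hu₀, hv₀, -⟩ := hp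
  match L with
  | [] => simp at hu₀ hv₀ ⊢; omega
  | [q] =>
    simp only [List.map_cons, List.map_nil, List.sum_cons, List.sum_nil] at hu₀ hv₀ ⊢
    by_contra h
    obtain rfl : u₀ = 0 := by omega
    obtain rfl : v₀ = 0 := by omega
    exact hne (by rw [show q = (u, v) from Prod.ext (by omega) (by omega)]; rfl)
  | _ :: _ :: _ => simp; omega

lemma mem_weightEq_of_nidentity {N : ℕ → ℕ → NSymm} (hN : NIdentity N) :
    ∀ u v, 1 ≤ u → 1 ≤ v → N u v ∈ supported ℤ ℤ (weightEq (u + v)) :=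
  induction_on_index fun u v hu hv ih => by
    rw [eq_sub_of_nidentity hN hu hv]
    refine Submodule.sub_mem _ (Submodule.smul_mem _ _ (Zgen_mem_weightEq _))
      (Submodule.sum_mem _ fun p hp => ?_)
    obtain ⟨-, hu₀, hv₀, -⟩ := mem_indexFinset.1 (mem_of_mem_erase hp)
    have := indexTerm_mem_supported weightEq one_mem_weightEq weightEq_mul_subset
      Zgen_mem_weightEq (gN := fun q => q.1 + q.2) (ih p hp)
    rwa [List.sum_map_add, show p.1.1 + p.1.2 + ((p.2.map Prod.fst).sum + (p.2.map Prod.snd).sum)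
      = u + v by omega] at this

lemma mem_lengthGe_of_nidentity {N : ℕ → ℕ → NSymm} (hN : NIdentity N) :
    ∀ u v, 1 ≤ u → 1 ≤ v →
      N u v ∈ supported ℤ ℤ (lengthGe 1) ∧
      N u v - ((u + v).choose u : ℤ) • Zgen (u + v) ∈ supported ℤ ℤ (lengthGe 2) :=
  induction_on_index fun u v hu hv ih => by
    have hrest : ∑ p ∈ (indexFinset u v).erase (diagIndex u v), indexTerm Zgen N p ∈
        supported ℤ ℤ (lengthGe 2) := Submodule.sum_mem _ fun p hp =>
      supported_mono (lengthGe_anti (two_le_of_isIndex hu hv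
          (mem_indexFinset.1 (mem_of_mem_erase hp)) (ne_of_mem_erase hp)))
        (indexTerm_mem_supported lengthGe one_mem_lengthGe lengthGe_mul_subset
          Zgen_mem_lengthGe fun q hq => (ih p hp q hq).1)
    have hsub : N u v - ((u + v).choose u : ℤ) • Zgen (u + v) =
        -∑ p ∈ (indexFinset u v).erase (diagIndex u v), indexTerm Zgen N p := by
      rw [eq_sub_of_nidentity hN hu hv]; abel
    refine ⟨?_, hsub ▸ Submodule.neg_mem _ hrest⟩
    rw [← sub_add_cancel (N u v) (((u + v).choose u : ℤ) • Zgen (u + v))]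
    refine Submodule.add_mem _ (supported_mono (lengthGe_anti one_le_two)
      (hsub ▸ Submodule.neg_mem _ hrest)) (Submodule.smul_mem _ _ ?_)
    simpa [Nat.min_eq_right (show 1 ≤ u + v by omega)] using Zgen_mem_lengthGe (u + v)

end Weight

lemma indexFinset_of_eq_zero {u v : ℕ} (h : u = 0 ∨ v = 0) :
    indexFinset u v = {((u, v), [])} := by
  ext ⟨⟨u₀, v₀⟩, L⟩
  simp only [mem_indexFinset, mem_singleton, Prod.mk.injEq]
  constructor
  · rintro ⟨hpos, hu, hv, -⟩
    dsimp only at hpos hu hv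
    obtain rfl : L = [] := h.elim
      (fun h => eq_nil_of_sum_map_eq_zero (fun q hq => (hpos q hq).1) (by omega))
      (fun h => eq_nil_of_sum_map_eq_zero (fun q hq => (hpos q hq).2) (by omega))
    simp_all
  · rintro ⟨⟨rfl, rfl⟩, rfl⟩
    simp [IsIndex]

lemma sum_indexTerm_of_nidentity {N : ℕ → ℕ → NSymm} (hN : NIdentity N) (u v : ℕ) :
    ∑ p ∈ indexFinset u v, indexTerm Zgen N p = ((u + v).choose u : ℤ) • Zgen (u + v) := by
  by_cases h : u = 0 ∨ v = 0
  · rw [indexFinset_of_eq_zero h, sum_singleton]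
    rcases h with rfl | rfl <;> simp [indexTerm, Zgen]
  · push Not at h
    exact (nidentity_iff.1 hN u v (by omega) (by omega)).symm

lemma Delta_Zgen (n : ℕ) :
    Delta (Zgen n) = ∑ i ∈ range (n + 1), Zgen i ⊗ₜ[ℤ] Zgen (n - i) := by
  cases n with
  | zero => simp [Zgen, Algebra.TensorProduct.one_def]
  | succ m => exact (MonoidAlgebra.lift_of _ _).trans (FreeMonoid.lift_eval_of _ _)

section Splittings

lemma isKeySorted_cons {q : ℕ × ℕ} {L : List (ℕ × ℕ)} :
    IsKeySorted (q :: L) ↔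
      (0 < q.1 ∧ 0 < q.2) ∧ (∀ k ∈ L.map reduceP, wlLt (reduceP q) k) ∧ IsKeySorted L := by
  simp only [IsKeySorted, List.mem_cons, forall_eq_or_imp, List.map_cons, List.pairwise_cons]
  tauto

def consMultiple (j a b : ℕ) (T : List (ℕ × ℕ)) : List (ℕ × ℕ) :=
  if j = 0 then T else (j * a, j * b) :: T

lemma consMultiple_zero (a b : ℕ) (T : List (ℕ × ℕ)) : consMultiple 0 a b T = T := if_pos rfl

lemma consMultiple_gcd {q : ℕ × ℕ} (hq : 0 < q.1) (T : List (ℕ × ℕ)) :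
    consMultiple (q.1.gcd q.2) (reduceP q).1 (reduceP q).2 T = q :: T := by
  rw [consMultiple, if_neg (Nat.gcd_pos_of_pos_left _ hq).ne', ← eq_mul_reduceP]

lemma consMultiple_injective (j a b : ℕ) : Function.Injective (consMultiple j a b) := by
  unfold consMultiple
  split
  · exact Function.injective_id
  · exact List.cons_injective

lemma consMultiple_inj_left {a b j j' : ℕ} {A A' : List (ℕ × ℕ)} (ha : 0 < a)
    (hab : Nat.Coprime a b) (hA : (a, b) ∉ A.map reduceP) (hA' : (a, b) ∉ A'.map reduceP)
    (h : consMultiple j a b A = consMultiple j' a b A') : j = j' := by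
  unfold consMultiple at h
  split_ifs at h with hj hj'
  · omega
  · exact absurd (h ▸ List.mem_map_of_mem (f := reduceP) List.mem_cons_self)
      (reduceP_mul hab (Nat.pos_of_ne_zero hj') ▸ hA)
  · exact absurd (h ▸ List.mem_map_of_mem (f := reduceP) List.mem_cons_self)
      (reduceP_mul hab (Nat.pos_of_ne_zero hj) ▸ hA')
  · exact Nat.eq_of_mul_eq_mul_right ha (Prod.mk.inj (List.cons.inj h).1).1

lemma isKeySorted_consMultiple {a b j : ℕ} {T : List (ℕ × ℕ)} (ha : 0 < a) (hb : 0 < b)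
    (hab : Nat.Coprime a b) (hT : IsKeySorted T) (hlt : ∀ k ∈ T.map reduceP, wlLt (a, b) k) :
    IsKeySorted (consMultiple j a b T) := by
  unfold consMultiple
  split_ifs with hj
  · exact hT
  · refine isKeySorted_cons.2 ⟨⟨by positivity, by positivity⟩, ?_, hT⟩
    rwa [reduceP_mul hab (Nat.pos_of_ne_zero hj)]

lemma map_reduceP_consMultiple_subset {a b j : ℕ} (hab : Nat.Coprime a b) (T : List (ℕ × ℕ)) :
    (consMultiple j a b T).map reduceP ⊆ (a, b) :: T.map reduceP := by
  unfold consMultiple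
  split_ifs with hj
  · exact List.subset_cons_self _ _
  · simp [reduceP_mul hab (Nat.pos_of_ne_zero hj)]

/-- Write each entry `q = g • (a, b)` of `L`, with `(a, b) = reduceP q`, as
`j • (a, b) + (g - j) • (a, b)` and send the nonzero summands to the two lists. -/
def splittings : List (ℕ × ℕ) → Finset (List (ℕ × ℕ) × List (ℕ × ℕ))
  | [] => {([], [])}
  | q :: L => (range (q.1.gcd q.2 + 1)).biUnion fun j => (splittings L).image fun T =>
      (consMultiple j (reduceP q).1 (reduceP q).2 T.1,
        consMultiple (q.1.gcd q.2 - j) (reduceP q).1 (reduceP q).2 T.2)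

lemma mem_splittings_cons {q : ℕ × ℕ} {L : List (ℕ × ℕ)} {T : List (ℕ × ℕ) × List (ℕ × ℕ)} :
    T ∈ splittings (q :: L) ↔ ∃ j ≤ q.1.gcd q.2, ∃ T' ∈ splittings L,
      (consMultiple j (reduceP q).1 (reduceP q).2 T'.1,
        consMultiple (q.1.gcd q.2 - j) (reduceP q).1 (reduceP q).2 T'.2) = T := by
  simp [splittings]

lemma isKeySorted_of_mem_splittings :
    ∀ {L : List (ℕ × ℕ)}, IsKeySorted L → ∀ {T}, T ∈ splittings L →
      IsKeySorted T.1 ∧ IsKeySorted T.2 ∧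
      T.1.map reduceP ⊆ L.map reduceP ∧ T.2.map reduceP ⊆ L.map reduceP
  | [], _, T, hT => by
    obtain rfl := mem_singleton.1 hT
    simp [IsKeySorted]
  | q :: L, hL, T, hT => by
    obtain ⟨hq, hlt, hL⟩ := isKeySorted_cons.1 hL
    obtain ⟨j, -, T', hT', rfl⟩ := mem_splittings_cons.1 hT
    obtain ⟨h₁, h₂, s₁, s₂⟩ := isKeySorted_of_mem_splittings hL hT'
    have hab := coprime_reduceP hq.1
    have ha := reduceP_fst_pos hq.1
    have hb := reduceP_snd_pos hq.2
    have hkeys : ∀ i (A : List (ℕ × ℕ)), A.map reduceP ⊆ L.map reduceP →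
        (consMultiple i (reduceP q).1 (reduceP q).2 A).map reduceP ⊆ (q :: L).map reduceP :=
      fun i A hA => List.Subset.trans (map_reduceP_consMultiple_subset hab A)
        (List.cons_subset_cons _ hA)
    exact ⟨isKeySorted_consMultiple ha hb hab h₁ fun k hk => hlt k (s₁ hk),
      isKeySorted_consMultiple ha hb hab h₂ fun k hk => hlt k (s₂ hk),
      hkeys _ _ s₁, hkeys _ _ s₂⟩

lemma sum_splittings_cons {β : Type*} [AddCommMonoid β] {q : ℕ × ℕ} {L : List (ℕ × ℕ)}
    (hL : IsKeySorted (q :: L)) (f : List (ℕ × ℕ) × List (ℕ × ℕ) → β) :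
    ∑ T ∈ splittings (q :: L), f T =
      ∑ j ∈ range (q.1.gcd q.2 + 1), ∑ T ∈ splittings L,
        f (consMultiple j (reduceP q).1 (reduceP q).2 T.1,
          consMultiple (q.1.gcd q.2 - j) (reduceP q).1 (reduceP q).2 T.2) := by
  obtain ⟨hq, hlt, hL⟩ := isKeySorted_cons.1 hL
  have hnot : ∀ T ∈ splittings L, reduceP q ∉ T.1.map reduceP := fun T hT hk =>
    wlLt_irrefl _ (hlt _ ((isKeySorted_of_mem_splittings hL hT).2.2.1 hk))
  rw [splittings, sum_biUnion]
  · exact sum_congr rfl fun j _ => sum_image fun T _ T' _ h => Prod.ext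
      (consMultiple_injective _ _ _ (congrArg Prod.fst h))
      (consMultiple_injective _ _ _ (congrArg Prod.snd h))
  · intro j _ j' _ hne
    simp only [Function.onFun, disjoint_left, mem_image]
    rintro _ ⟨T, hT, rfl⟩ ⟨T', hT', h⟩
    exact hne (consMultiple_inj_left (reduceP_fst_pos hq.1) (coprime_reduceP hq.1)
      (hnot T hT) (hnot T' hT') (congrArg Prod.fst h).symm)

end Splittings

section Merge

def mergeByKey : List (ℕ × ℕ) → List (ℕ × ℕ) → List (ℕ × ℕ)
  | [], L₂ => L₂
  | L₁, [] => L₁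
  | q₁ :: T₁, q₂ :: T₂ =>
    if reduceP q₁ = reduceP q₂ then (q₁ + q₂) :: mergeByKey T₁ T₂
    else if wlLt (reduceP q₁) (reduceP q₂) then q₁ :: mergeByKey T₁ (q₂ :: T₂)
    else q₂ :: mergeByKey (q₁ :: T₁) T₂
termination_by L₁ L₂ => L₁.length + L₂.length

lemma mergeByKey_nil_right (L : List (ℕ × ℕ)) : mergeByKey L [] = L := by
  cases L <;> simp [mergeByKey]

lemma sum_map_mergeByKey (f : ℕ × ℕ →+ ℕ) (L₁ L₂ : List (ℕ × ℕ)) :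
    ((mergeByKey L₁ L₂).map f).sum = (L₁.map f).sum + (L₂.map f).sum := by
  fun_induction mergeByKey L₁ L₂ <;>
    simp only [List.map_cons, List.sum_cons, List.map_nil, List.sum_nil, map_add, *] <;> ring

lemma mem_keys_mergeByKey {L₁ L₂ : List (ℕ × ℕ)} (h₁ : ∀ q ∈ L₁, 0 < q.1) :
    ∀ k ∈ (mergeByKey L₁ L₂).map reduceP, k ∈ L₁.map reduceP ∨ k ∈ L₂.map reduceP := by
  fun_induction mergeByKey L₁ L₂ with
  | case1 => simp
  | case2 => simp
  | case3 q₁ T₁ q₂ T₂ hk ih =>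
    simp only [List.map_cons, List.mem_cons, forall_eq_or_imp,
      reduceP_add (h₁ q₁ List.mem_cons_self) hk, true_or, true_and]
    intro k hk'
    rcases ih (fun q hq => h₁ q (List.mem_cons_of_mem _ hq)) k hk' with h | h <;> simp [h]
  | case4 q₁ T₁ q₂ T₂ _ _ ih =>
    simp only [List.map_cons, List.mem_cons, forall_eq_or_imp, true_or, true_and]
    intro k hk'
    rcases ih (fun q hq => h₁ q (List.mem_cons_of_mem _ hq)) k hk' with h | h <;> simp_all
  | case5 q₁ T₁ q₂ T₂ _ _ ih =>
    simp only [List.map_cons, List.mem_cons, forall_eq_or_imp, true_or, or_true, true_and]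
    intro k hk'
    rcases ih h₁ k hk' with h | h <;> simp_all

lemma isKeySorted_mergeByKey {L₁ L₂ : List (ℕ × ℕ)} (h₁ : IsKeySorted L₁) (h₂ : IsKeySorted L₂) :
    IsKeySorted (mergeByKey L₁ L₂) := by
  fun_induction mergeByKey L₁ L₂ with
  | case1 => exact h₂
  | case2 => exact h₁
  | case3 q₁ T₁ q₂ T₂ hk ih =>
    obtain ⟨hq₁, hlt₁, hT₁⟩ := isKeySorted_cons.1 h₁
    obtain ⟨hq₂, hlt₂, hT₂⟩ := isKeySorted_cons.1 h₂
    refine isKeySorted_cons.2 ⟨⟨by simp; omega, by simp; omega⟩, fun k hk' => ?_, ih hT₁ hT₂⟩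
    rw [reduceP_add hq₁.1 hk]
    rcases mem_keys_mergeByKey (fun q hq => (hT₁.1 q hq).1) k hk' with h | h
    · exact hlt₁ k h
    · exact hk ▸ hlt₂ k h
  | case4 q₁ T₁ q₂ T₂ _ hlt ih =>
    obtain ⟨hq₁, hlt₁, hT₁⟩ := isKeySorted_cons.1 h₁
    obtain ⟨-, hlt₂, -⟩ := isKeySorted_cons.1 h₂
    refine isKeySorted_cons.2 ⟨hq₁, fun k hk' => ?_, ih hT₁ h₂⟩
    rcases mem_keys_mergeByKey (fun q hq => (hT₁.1 q hq).1) k hk' with h | h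
    · exact hlt₁ k h
    · rcases List.mem_cons.1 (List.map_cons ▸ h) with rfl | h
      · exact hlt
      · exact wlLt_trans hlt (hlt₂ k h)
  | case5 q₁ T₁ q₂ T₂ hne hlt ih =>
    obtain ⟨-, hlt₁, -⟩ := isKeySorted_cons.1 h₁
    obtain ⟨hq₂, hlt₂, hT₂⟩ := isKeySorted_cons.1 h₂
    have hgt := (wlLt_or_wlLt_of_ne hne).resolve_left hlt
    refine isKeySorted_cons.2 ⟨hq₂, fun k hk' => ?_, ih h₁ hT₂⟩
    rcases mem_keys_mergeByKey (fun q hq => (h₁.1 q hq).1) k hk' with h | h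
    · rcases List.mem_cons.1 (List.map_cons ▸ h) with rfl | h
      · exact hgt
      · exact wlLt_trans hgt (hlt₁ k h)
    · exact hlt₂ k h

lemma mergeByKey_cons_right_of_forall_lt {q : ℕ × ℕ} {A : List (ℕ × ℕ)} (B : List (ℕ × ℕ))
    (hA : ∀ k ∈ A.map reduceP, wlLt (reduceP q) k) :
    mergeByKey A (q :: B) = q :: mergeByKey A B := by
  cases A with
  | nil => simp [mergeByKey]
  | cons r A =>
    have hlt := hA _ (List.mem_map_of_mem List.mem_cons_self)
    rw [mergeByKey.eq_3, if_neg fun h => wlLt_irrefl _ (h ▸ hlt), if_neg (wlLt_asymm hlt)]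

lemma mergeByKey_cons_left_of_forall_lt {q : ℕ × ℕ} (A : List (ℕ × ℕ)) {B : List (ℕ × ℕ)}
    (hB : ∀ k ∈ B.map reduceP, wlLt (reduceP q) k) :
    mergeByKey (q :: A) B = q :: mergeByKey A B := by
  cases B with
  | nil => simp [mergeByKey_nil_right]
  | cons r B =>
    have hlt := hB _ (List.mem_map_of_mem List.mem_cons_self)
    rw [mergeByKey.eq_3, if_neg fun h => wlLt_irrefl _ (h ▸ hlt), if_pos hlt]

lemma nil_mem_splittings : ∀ {L : List (ℕ × ℕ)}, (∀ q ∈ L, 0 < q.1) → ([], L) ∈ splittings L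
  | [], _ => mem_singleton_self _
  | q :: L, hL => mem_splittings_cons.2 ⟨0, Nat.zero_le _, ([], L),
      nil_mem_splittings fun r hr => hL r (List.mem_cons_of_mem _ hr), by
      rw [consMultiple_zero, Nat.sub_zero, consMultiple_gcd (hL q List.mem_cons_self)]⟩

lemma mem_splittings_nil : ∀ {L : List (ℕ × ℕ)}, (∀ q ∈ L, 0 < q.1) → (L, []) ∈ splittings L
  | [], _ => mem_singleton_self _
  | q :: L, hL => mem_splittings_cons.2 ⟨q.1.gcd q.2, le_rfl, (L, []),
      mem_splittings_nil fun r hr => hL r (List.mem_cons_of_mem _ hr), by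
      rw [Nat.sub_self, consMultiple_zero, consMultiple_gcd (hL q List.mem_cons_self)]⟩

lemma mem_splittings_mergeByKey {L₁ L₂ : List (ℕ × ℕ)} (h₁ : IsKeySorted L₁)
    (h₂ : IsKeySorted L₂) : (L₁, L₂) ∈ splittings (mergeByKey L₁ L₂) := by
  fun_induction mergeByKey L₁ L₂ with
  | case1 => exact nil_mem_splittings fun q hq => (h₂.1 q hq).1
  | case2 => exact mem_splittings_nil fun q hq => (h₁.1 q hq).1
  | case3 q₁ T₁ q₂ T₂ hk ih =>
    obtain ⟨hq₁, -, hT₁⟩ := isKeySorted_cons.1 h₁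
    obtain ⟨hq₂, -, hT₂⟩ := isKeySorted_cons.1 h₂
    refine mem_splittings_cons.2 ⟨q₁.1.gcd q₁.2, by rw [gcd_add hq₁.1 hk]; omega, (T₁, T₂),
      ih hT₁ hT₂, ?_⟩
    rw [gcd_add hq₁.1 hk, Nat.add_sub_cancel_left, reduceP_add hq₁.1 hk,
      consMultiple_gcd hq₁.1, hk, consMultiple_gcd hq₂.1]
  | case4 q₁ T₁ q₂ T₂ _ _ ih =>
    obtain ⟨hq₁, -, hT₁⟩ := isKeySorted_cons.1 h₁
    exact mem_splittings_cons.2 ⟨q₁.1.gcd q₁.2, le_rfl, (T₁, q₂ :: T₂), ih hT₁ h₂, by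
      rw [Nat.sub_self, consMultiple_zero, consMultiple_gcd hq₁.1]⟩
  | case5 q₁ T₁ q₂ T₂ _ _ ih =>
    obtain ⟨hq₂, -, hT₂⟩ := isKeySorted_cons.1 h₂
    exact mem_splittings_cons.2 ⟨0, Nat.zero_le _, (q₁ :: T₁, T₂), ih h₁ hT₂, by
      rw [consMultiple_zero, Nat.sub_zero, consMultiple_gcd hq₂.1]⟩

lemma mergeByKey_of_mem_splittings :
    ∀ {L : List (ℕ × ℕ)}, IsKeySorted L → ∀ {T}, T ∈ splittings L → mergeByKey T.1 T.2 = L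
  | [], _, T, hT => by
    obtain rfl := mem_singleton.1 hT
    exact mergeByKey_nil_right []
  | q :: L, hL, T, hT => by
    obtain ⟨hq, hlt, hL⟩ := isKeySorted_cons.1 hL
    obtain ⟨j, hj, ⟨A, B⟩, hAB, rfl⟩ := mem_splittings_cons.1 hT
    obtain ⟨-, -, hA, hB⟩ := isKeySorted_of_mem_splittings hL hAB
    have ih : mergeByKey A B = L := mergeByKey_of_mem_splittings hL hAB
    dsimp only at hA hB ⊢
    rcases Nat.eq_zero_or_pos j with rfl | hj₀
    · rw [consMultiple_zero, Nat.sub_zero, consMultiple_gcd hq.1,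
        mergeByKey_cons_right_of_forall_lt _ fun k hk => hlt k (hA hk), ih]
    rcases hj.eq_or_lt with rfl | hjg
    · rw [Nat.sub_self, consMultiple_zero, consMultiple_gcd hq.1,
        mergeByKey_cons_left_of_forall_lt _ fun k hk => hlt k (hB hk), ih]
    have hab := coprime_reduceP hq.1
    rw [consMultiple, consMultiple, if_neg hj₀.ne', if_neg (by omega), mergeByKey.eq_3,
      if_pos (by rw [reduceP_mul hab hj₀, reduceP_mul hab (by omega)]), ih]
    conv_rhs => rw [eq_mul_reduceP q]
    simp only [Prod.mk_add_mk, ← add_mul, Nat.add_sub_cancel' hj]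

end Merge

section Coproduct

variable (N : ℕ → ℕ → NSymm)

def rayCurve (a b i : ℕ) : NSymm := if i = 0 then 1 else N (i * a) (i * b)

def comulFormula (u v : ℕ) : NSymm ⊗[ℤ] NSymm :=
  ∑ j ∈ range (u.gcd v + 1),
    rayCurve N (reduceP (u, v)).1 (reduceP (u, v)).2 j ⊗ₜ[ℤ]
      rayCurve N (reduceP (u, v)).1 (reduceP (u, v)).2 (u.gcd v - j)

lemma list_prod_consMultiple (a b j : ℕ) (T : List (ℕ × ℕ)) :
    ((consMultiple j a b T).map fun q => N q.1 q.2).prod =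
      rayCurve N a b j * (T.map fun q => N q.1 q.2).prod := by
  unfold consMultiple rayCurve
  split_ifs <;> simp

lemma list_prod_comulFormula : ∀ {L : List (ℕ × ℕ)}, IsKeySorted L →
    (L.map fun q => comulFormula N q.1 q.2).prod =
      ∑ T ∈ splittings L,
        (T.1.map fun q => N q.1 q.2).prod ⊗ₜ[ℤ] (T.2.map fun q => N q.1 q.2).prod
  | [], _ => by simp [splittings, Algebra.TensorProduct.one_def]
  | q :: L, hL => by
    rw [sum_splittings_cons hL, List.map_cons, List.prod_cons,
      list_prod_comulFormula (isKeySorted_cons.1 hL).2.2, comulFormula, sum_mul_sum]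
    refine sum_congr rfl fun j _ => sum_congr rfl fun T _ => ?_
    rw [Algebra.TensorProduct.tmul_mul_tmul, list_prod_consMultiple, list_prod_consMultiple]

lemma indexTerm_comulFormula {u v : ℕ} {p : Index} (hp : IsIndex u v p) :
    indexTerm (fun n => Delta (Zgen n)) (comulFormula N) p =
      ∑ ij ∈ range (p.1.1 + 1) ×ˢ range (p.1.2 + 1), ∑ T ∈ splittings p.2,
        indexTerm Zgen N (ij, T.1) ⊗ₜ[ℤ] indexTerm Zgen N ((p.1.1 - ij.1, p.1.2 - ij.2), T.2) := by
  rw [indexTerm, Delta_Zgen, Delta_Zgen, list_prod_comulFormula N hp.isKeySorted, sum_product,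
    sum_mul_sum, sum_mul]
  refine sum_congr rfl fun i _ => ?_
  rw [sum_mul]
  refine sum_congr rfl fun j _ => ?_
  rw [mul_sum]
  refine sum_congr rfl fun T _ => ?_
  simp only [indexTerm, Algebra.TensorProduct.tmul_mul_tmul]

end Coproduct

section Bijection

abbrev SplitIndex : Type := Σ _ : Index, (ℕ × ℕ) × (List (ℕ × ℕ) × List (ℕ × ℕ))

abbrev IndexPair : Type := Σ _ : (ℕ × ℕ) × (ℕ × ℕ), Index × Index

def splitIndexSet (u v : ℕ) : Finset SplitIndex :=
  (indexFinset u v).sigma fun p => (range (p.1.1 + 1) ×ˢ range (p.1.2 + 1)) ×ˢ splittings p.2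

def indexPairSet (u v : ℕ) : Finset IndexPair :=
  (antidiagonal u ×ˢ antidiagonal v).sigma fun x =>
    indexFinset x.1.1 x.2.1 ×ˢ indexFinset x.1.2 x.2.2

def splitIndex (s : SplitIndex) : IndexPair :=
  ⟨((s.2.1.1 + (s.2.2.1.map Prod.fst).sum, s.1.1.1 - s.2.1.1 + (s.2.2.2.map Prod.fst).sum),
      (s.2.1.2 + (s.2.2.1.map Prod.snd).sum, s.1.1.2 - s.2.1.2 + (s.2.2.2.map Prod.snd).sum)),
    ((s.2.1, s.2.2.1), ((s.1.1.1 - s.2.1.1, s.1.1.2 - s.2.1.2), s.2.2.2))⟩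

def mergeIndex (t : IndexPair) : SplitIndex :=
  ⟨((t.2.1.1.1 + t.2.2.1.1, t.2.1.1.2 + t.2.2.1.2), mergeByKey t.2.1.2 t.2.2.2),
    (t.2.1.1, (t.2.1.2, t.2.2.2))⟩

lemma sum_map_fst_snd_mergeByKey (L₁ L₂ : List (ℕ × ℕ)) :
    ((mergeByKey L₁ L₂).map Prod.fst).sum = (L₁.map Prod.fst).sum + (L₂.map Prod.fst).sum ∧
    ((mergeByKey L₁ L₂).map Prod.snd).sum = (L₁.map Prod.snd).sum + (L₂.map Prod.snd).sum :=
  ⟨sum_map_mergeByKey (AddMonoidHom.fst ℕ ℕ) L₁ L₂, sum_map_mergeByKey (AddMonoidHom.snd ℕ ℕ) L₁ L₂⟩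

variable {u v : ℕ}

lemma splitIndex_mem {s : SplitIndex} (hs : s ∈ splitIndexSet u v) :
    splitIndex s ∈ indexPairSet u v := by
  obtain ⟨⟨⟨u₀, v₀⟩, L⟩, ⟨i, j⟩, T₁, T₂⟩ := s
  simp only [splitIndexSet, mem_sigma, mem_product, mem_range, mem_indexFinset] at hs
  obtain ⟨hp, ⟨hi, hj⟩, hT⟩ := hs
  obtain ⟨h₁, h₂, -, -⟩ := isKeySorted_of_mem_splittings hp.isKeySorted hT
  obtain ⟨hfst, hsnd⟩ := sum_map_fst_snd_mergeByKey T₁ T₂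
  rw [mergeByKey_of_mem_splittings hp.isKeySorted hT] at hfst hsnd
  obtain ⟨-, hu, hv, -⟩ := hp
  dsimp only at hu hv hfst hsnd
  simp only [splitIndex, indexPairSet, mem_sigma, mem_product, HasAntidiagonal.mem_antidiagonal,
    mem_indexFinset]
  exact ⟨⟨by omega, by omega⟩, ⟨h₁.1, rfl, rfl, h₁.2⟩, ⟨h₂.1, rfl, rfl, h₂.2⟩⟩

lemma mergeIndex_mem {t : IndexPair} (ht : t ∈ indexPairSet u v) :
    mergeIndex t ∈ splitIndexSet u v := by
  obtain ⟨⟨⟨u₁, u₂⟩, ⟨v₁, v₂⟩⟩, ⟨⟨i, j⟩, T₁⟩, ⟨⟨i', j'⟩, T₂⟩⟩ := t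
  simp only [indexPairSet, mem_sigma, mem_product, HasAntidiagonal.mem_antidiagonal,
    mem_indexFinset] at ht
  obtain ⟨⟨hu, hv⟩, hp₁, hp₂⟩ := ht
  have h₁ := hp₁.isKeySorted
  have h₂ := hp₂.isKeySorted
  have hT := isKeySorted_mergeByKey h₁ h₂
  obtain ⟨hfst, hsnd⟩ := sum_map_fst_snd_mergeByKey T₁ T₂
  obtain ⟨-, hu₁, hv₁, -⟩ := hp₁
  obtain ⟨-, hu₂, hv₂, -⟩ := hp₂
  dsimp only at hu₁ hv₁ hu₂ hv₂
  simp only [mergeIndex, splitIndexSet, mem_sigma, mem_product, mem_range, mem_indexFinset]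
  refine ⟨⟨hT.1, ?_, ?_, hT.2⟩, ⟨by omega, by omega⟩, mem_splittings_mergeByKey h₁ h₂⟩ <;>
    dsimp only <;> omega

lemma mergeIndex_splitIndex {s : SplitIndex} (hs : s ∈ splitIndexSet u v) :
    mergeIndex (splitIndex s) = s := by
  obtain ⟨⟨⟨u₀, v₀⟩, L⟩, ⟨i, j⟩, T₁, T₂⟩ := s
  simp only [splitIndexSet, mem_sigma, mem_product, mem_range, mem_indexFinset] at hs
  obtain ⟨hp, ⟨hi, hj⟩, hT⟩ := hs
  simp only [mergeIndex, splitIndex, mergeByKey_of_mem_splittings hp.isKeySorted hT,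
    Nat.add_sub_cancel' (Nat.lt_succ_iff.1 hi), Nat.add_sub_cancel' (Nat.lt_succ_iff.1 hj)]

lemma splitIndex_mergeIndex {t : IndexPair} (ht : t ∈ indexPairSet u v) :
    splitIndex (mergeIndex t) = t := by
  obtain ⟨⟨⟨u₁, u₂⟩, ⟨v₁, v₂⟩⟩, ⟨⟨i, j⟩, T₁⟩, ⟨⟨i', j'⟩, T₂⟩⟩ := t
  simp only [indexPairSet, mem_sigma, mem_product, HasAntidiagonal.mem_antidiagonal,
    mem_indexFinset] at ht
  obtain ⟨-, ⟨-, hu₁, hv₁, -⟩, ⟨-, hu₂, hv₂, -⟩⟩ := ht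
  simp only [splitIndex, mergeIndex, Nat.add_sub_cancel_left] at *
  rw [hu₁, hv₁, hu₂, hv₂]

lemma sum_indexTerm_comulFormula_eq_sum_tmul (N : ℕ → ℕ → NSymm) (u v : ℕ) :
    ∑ p ∈ indexFinset u v, indexTerm (fun n => Delta (Zgen n)) (comulFormula N) p =
      ∑ x ∈ antidiagonal u ×ˢ antidiagonal v,
        (∑ y ∈ indexFinset x.1.1 x.2.1, indexTerm Zgen N y) ⊗ₜ[ℤ]
          (∑ y ∈ indexFinset x.1.2 x.2.2, indexTerm Zgen N y) :=
  calc _ = ∑ s ∈ splitIndexSet u v, indexTerm Zgen N (s.2.1, s.2.2.1) ⊗ₜ[ℤ]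
          indexTerm Zgen N ((s.1.1.1 - s.2.1.1, s.1.1.2 - s.2.1.2), s.2.2.2) := by
        rw [splitIndexSet, sum_sigma]
        refine sum_congr rfl fun p hp => ?_
        rw [indexTerm_comulFormula N (mem_indexFinset.1 hp),
          sum_product (range (p.1.1 + 1) ×ˢ range (p.1.2 + 1)) (splittings p.2)]
    _ = ∑ t ∈ indexPairSet u v, indexTerm Zgen N t.2.1 ⊗ₜ[ℤ] indexTerm Zgen N t.2.2 :=
        sum_nbij' splitIndex mergeIndex (fun _ => splitIndex_mem) (fun _ => mergeIndex_mem)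
          (fun _ => mergeIndex_splitIndex) (fun _ => splitIndex_mergeIndex) fun _ _ => by
            simp only [splitIndex]
    _ = _ := by
        rw [indexPairSet, sum_sigma]
        simp only [sum_product, TensorProduct.sum_tmul, TensorProduct.tmul_sum]
        exact sum_congr rfl fun _ _ => sum_congr rfl fun _ _ => sum_comm

end Bijection

lemma sum_filter_choose_mul_choose {u v : ℕ} (k : ℕ × ℕ) (hk : k.1 + k.2 = u + v) :
    ∑ x ∈ (antidiagonal u ×ˢ antidiagonal v).filter
        (fun x => (x.1.1 + x.2.1, x.1.2 + x.2.2) = k),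
      (x.1.1 + x.2.1).choose x.1.1 * (x.1.2 + x.2.2).choose x.1.2 = (u + v).choose u :=
  calc
    _ = ∑ a ∈ (antidiagonal u).filter (fun a => a.1 ≤ k.1 ∧ a.2 ≤ k.2),
          k.1.choose a.1 * k.2.choose a.2 := by
      refine sum_nbij' Prod.fst (fun a => (a, (k.1 - a.1, k.2 - a.2))) ?_ ?_ ?_
        (fun _ _ => rfl) ?_
      · rintro ⟨⟨a, b⟩, c, d⟩ hx
        simp only [mem_filter, mem_product, HasAntidiagonal.mem_antidiagonal, Prod.ext_iff] at hx ⊢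
        omega
      · rintro ⟨a, b⟩ h
        simp only [mem_filter, mem_product, HasAntidiagonal.mem_antidiagonal, Prod.ext_iff] at h ⊢
        omega
      · rintro ⟨⟨a, b⟩, c, d⟩ hx
        simp only [mem_filter, mem_product, HasAntidiagonal.mem_antidiagonal, Prod.ext_iff] at hx
        simp only [Prod.mk.injEq, true_and]
        omega
      · rintro ⟨⟨a, b⟩, c, d⟩ hx
        obtain ⟨-, rfl⟩ := mem_filter.1 hx
        rfl
    _ = ∑ a ∈ antidiagonal u, k.1.choose a.1 * k.2.choose a.2 :=
      sum_filter_of_ne fun a _ hne => by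
        by_contra h
        rcases not_and_or.1 h with h | h <;> simp [Nat.choose_eq_zero_of_lt (not_le.1 h)] at hne
    _ = (u + v).choose u := by rw [← Nat.add_choose_eq, hk]

lemma sum_antidiagonal_choose_mul_choose_smul {β : Type*} [AddCommMonoid β] (F : ℕ → ℕ → β)
    (u v : ℕ) :
    ∑ x ∈ antidiagonal u ×ˢ antidiagonal v,
      ((x.1.1 + x.2.1).choose x.1.1 * (x.1.2 + x.2.2).choose x.1.2) •
        F (x.1.1 + x.2.1) (x.1.2 + x.2.2) =
      (u + v).choose u • ∑ k ∈ antidiagonal (u + v), F k.1 k.2 := by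
  rw [← sum_fiberwise_of_maps_to (g := fun x => (x.1.1 + x.2.1, x.1.2 + x.2.2))
    (t := antidiagonal (u + v)) fun x hx => by
      simp only [mem_product, HasAntidiagonal.mem_antidiagonal] at hx ⊢; omega, smul_sum]
  refine sum_congr rfl fun k hk => ?_
  rw [← sum_filter_choose_mul_choose k (HasAntidiagonal.mem_antidiagonal.1 hk), sum_smul]
  refine sum_congr rfl fun x hx => ?_
  obtain rfl := (mem_filter.1 hx).2
  rfl

lemma sum_indexTerm_comulFormula {N : ℕ → ℕ → NSymm} (hN : NIdentity N) (u v : ℕ) :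
    ∑ p ∈ indexFinset u v, indexTerm (fun n => Delta (Zgen n)) (comulFormula N) p =
      ((u + v).choose u : ℤ) • Delta (Zgen (u + v)) := by
  have hΔ : Delta (Zgen (u + v)) = ∑ k ∈ antidiagonal (u + v), Zgen k.1 ⊗ₜ[ℤ] Zgen k.2 := by
    rw [Delta_Zgen, Nat.sum_antidiagonal_eq_sum_range_succ_mk]
  rw [sum_indexTerm_comulFormula_eq_sum_tmul, hΔ, natCast_zsmul]
  refine (sum_congr rfl fun x _ => ?_).trans
    (sum_antidiagonal_choose_mul_choose_smul (fun i j => Zgen i ⊗ₜ[ℤ] Zgen j) u v)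
  rw [sum_indexTerm_of_nidentity hN, sum_indexTerm_of_nidentity hN, TensorProduct.smul_tmul_smul,
    ← Nat.cast_mul, natCast_zsmul]

lemma Delta_eq_comulFormula {N : ℕ → ℕ → NSymm} (hN : NIdentity N) :
    ∀ u v, 1 ≤ u → 1 ≤ v → Delta (N u v) = comulFormula N u v :=
  eq_of_sum_indexTerm_eq (Z := fun n => Delta (Zgen n)) (map_one Delta) fun u v _ _ => by
    simp only [← map_indexTerm Delta, ← map_sum, sum_indexTerm_of_nidentity hN, map_zsmul,
      sum_indexTerm_comulFormula hN]

lemma isCurveN_rayCurve {N : ℕ → ℕ → NSymm} (hN : NIdentity N) {a b : ℕ} (ha : 1 ≤ a)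
    (hb : 1 ≤ b) (hab : Nat.Coprime a b) : IsCurveN (rayCurve N a b) := by
  refine ⟨if_pos rfl, fun n => ?_⟩
  rcases Nat.eq_zero_or_pos n with rfl | hn
  · simp [rayCurve, Algebra.TensorProduct.one_def]
  · rw [rayCurve, if_neg hn.ne',
      Delta_eq_comulFormula hN _ _ (Nat.mul_pos hn ha) (Nat.mul_pos hn hb), comulFormula, Nat.gcd_mul_left, hab.gcd_eq_one, mul_one, reduceP_mul hab hn]

end SecondIsobaric

/-- Second isobaric decomposition theorem: existence and uniqueness of the `N_{u,v}`,
their leading term, homogeneity, and the curve property. -/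
theorem second_isobaric :
    (∃ N : ℕ → ℕ → NSymm, NIdentity N) ∧
    (∀ N N' : ℕ → ℕ → NSymm, NIdentity N → NIdentity N' →
      ∀ u v : ℕ, 1 ≤ u → 1 ≤ v → N u v = N' u v) ∧
    (∀ N : ℕ → ℕ → NSymm, NIdentity N → ∀ u v : ℕ, 1 ≤ u → 1 ≤ v →
      (∀ w : FreeMonoid ℕ,
        coeffw (N u v - ((u + v).choose u : ℤ) • Zgen (u + v)) w ≠ 0 →
        2 ≤ (FreeMonoid.toList w).length) ∧
      IsHomog (N u v) (u + v)) ∧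
    (∀ N : ℕ → ℕ → NSymm, NIdentity N → ∀ a b : ℕ, 1 ≤ a → 1 ≤ b → Nat.gcd a b = 1 →
      IsCurveN (fun i => if i = 0 then 1 else N (i * a) (i * b))) := by
  open SecondIsobaric in
  refine ⟨⟨isobaricN, nidentity_isobaricN⟩, fun N N' hN hN' => ?_, fun N hN u v hu hv => ?_,
    fun N hN a b ha hb hab => isCurveN_rayCurve hN ha hb hab⟩
  · refine eq_of_sum_indexTerm_eq (Z := Zgen) rfl fun u v hu hv => ?_
    rw [← nidentity_iff.1 hN u v hu hv, ← nidentity_iff.1 hN' u v hu hv]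
  · exact ⟨fun w => mem_of_mem_supported (mem_lengthGe_of_nidentity hN u v hu hv).2,
      fun w => mem_of_mem_supported (mem_weightEq_of_nidentity hN u v hu hv)⟩

end
end
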